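/- arXiv:quant-ph/0603115 — 5 statements merged into one kernel-verified Lean document; each statement's English description precedes it below -/
import Mathlib

section
/- Let d ≥ 1 and N ≥ d be integers, and let λ_1 ≥ λ_2 ≥ … ≥ λ_d ≥ 1 be integers with λ_1 + … + λ_d = N. Then ∏_{i=1}^d (λ_i + d − i)! ≤ N! · ∏_{k=1}^{d−1} k!, with equality when λ_1 = N − d + 1 and λ_i = 1 for 2 ≤ i ≤ d. -/
open Finset

lemma fact_shift (t y : ℕ) (h : t ≤ y) :
    ∀ k, (t + k).factorial * y.factorial ≤ (y + k).factorial * t.factorial := by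
  intro k
  induction k with
  | zero => simp [Nat.mul_comm]
  | succ k ih =>
    rw [show t + (k + 1) = (t + k) + 1 from rfl, show y + (k + 1) = (y + k) + 1 from rfl,
      Nat.factorial_succ, Nat.factorial_succ]
    calc (t + k + 1) * (t + k).factorial * y.factorial
        = (t + k + 1) * ((t + k).factorial * y.factorial) := by ring
      _ ≤ (y + k + 1) * ((y + k).factorial * t.factorial) :=
          Nat.mul_le_mul (by omega) ih
      _ = (y + k + 1) * (y + k).factorial * t.factorial := by ring

lemma fact_exchange (t x y s : ℕ) (ht : t ≤ x) (hx : x ≤ s) (hsum : x + y = s + t) :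
    x.factorial * y.factorial ≤ s.factorial * t.factorial := by
  obtain ⟨k, rfl⟩ := Nat.exists_eq_add_of_le ht
  have hs : s = y + k := by omega
  subst hs
  exact fact_shift t y (by omega) k

lemma main_ineq : ∀ d, 1 ≤ d → ∀ N, d ≤ N → ∀ lam : Fin d → ℕ, (∀ i, 1 ≤ lam i) →
    (∑ i, lam i = N) →
    ∏ i : Fin d, (lam i + (d - 1 - (i : ℕ))).factorial
      ≤ N.factorial * ∏ k ∈ Finset.range d, k.factorial := by
  intro d
  induction d with
  | zero => omega
  | succ e ih =>
    intro _ N hN lam hpos hsum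
    rcases Nat.eq_zero_or_pos e with rfl | he
    · -- d = 1
      have h0 : lam 0 = N := by simpa using hsum
      simp [Fin.prod_univ_one, h0]
    · -- d = e + 1, e ≥ 1
      have hsum' : lam 0 + ∑ i : Fin e, lam i.succ = N := by
        rw [← hsum, Fin.sum_univ_succ]
      have hrest : e ≤ ∑ i : Fin e, lam i.succ := by
        calc e = ∑ _i : Fin e, 1 := by simp
          _ ≤ ∑ i : Fin e, lam i.succ := Finset.sum_le_sum (fun i _ => hpos i.succ)
      have hlam0 : lam 0 + e ≤ N := by omega
      have hIH := ih he (N - lam 0) (by omega) (fun i => lam i.succ)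
        (fun i => hpos i.succ) (by show ∑ i : Fin e, lam i.succ = N - lam 0; omega)
      rw [Fin.prod_univ_succ]
      have hexp : ∀ i : Fin e, (lam i.succ + (e + 1 - 1 - ((i.succ : ℕ)))).factorial
          = (lam i.succ + (e - 1 - (i : ℕ))).factorial := by
        intro i
        congr 1
        have : (i.succ : ℕ) = (i : ℕ) + 1 := rfl
        omega
      rw [Finset.prod_congr rfl (fun i _ => hexp i)]
      have h0 : (lam 0 + (e + 1 - 1 - ((0 : Fin (e+1)) : ℕ))) = lam 0 + e := by simp
      rw [h0]
      calc (lam 0 + e).factorial * ∏ i : Fin e, (lam i.succ + (e - 1 - (i : ℕ))).factorial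
          ≤ (lam 0 + e).factorial * ((N - lam 0).factorial * ∏ k ∈ Finset.range e, k.factorial) :=
            Nat.mul_le_mul_left _ hIH
        _ = ((lam 0 + e).factorial * (N - lam 0).factorial) * ∏ k ∈ Finset.range e, k.factorial := by
            ring
        _ ≤ (N.factorial * e.factorial) * ∏ k ∈ Finset.range e, k.factorial := by
            refine Nat.mul_le_mul_right _ ?_
            exact fact_exchange e (lam 0 + e) (N - lam 0) N (by omega) hlam0 (by omega)
        _ = N.factorial * ∏ k ∈ Finset.range (e + 1), k.factorial := by
            rw [Finset.prod_range_succ]; ring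

lemma prod_reflect_fact (e : ℕ) :
    ∏ i ∈ Finset.range e, (e - i).factorial = ∏ k ∈ Finset.range (e + 1), k.factorial := by
  have h1 : ∏ i ∈ Finset.range e, (e - i).factorial
      = ∏ i ∈ Finset.range e, ((e - 1 - i) + 1).factorial := by
    refine Finset.prod_congr rfl (fun i hi => ?_)
    have := Finset.mem_range.mp hi
    congr 1
    omega
  rw [h1, Finset.prod_range_reflect (fun j => (j + 1).factorial) e,
    Finset.prod_range_succ' (fun k => k.factorial) e]
  simp

/-- for integers `d ≥ 1`, `N ≥ d` and `λ_1 ≥ … ≥ λ_d ≥ 1` with `Σ λ_i = N`,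
`∏_{i=1}^d (λ_i + d - i)! ≤ N! · ∏_{k=1}^{d-1} k!`, with equality when
`λ_1 = N - d + 1` and `λ_i = 1` for `i ≥ 2`.  (Indices are 0-based, so the 1-based
exponent `λ_i + d - i` becomes `λ_i + (d - 1 - i)`, and `∏_{k=1}^{d-1} k! = ∏_{k<d} k!`.) -/
theorem stmt4 (d N : ℕ) (hd : 1 ≤ d) (hN : d ≤ N) :
    (∀ lam : Fin d → ℕ, (∀ i j : Fin d, i ≤ j → lam j ≤ lam i) → (∀ i, 1 ≤ lam i) →
      (∑ i, lam i = N) →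
      ∏ i : Fin d, (lam i + (d - 1 - (i : ℕ))).factorial
        ≤ N.factorial * ∏ k ∈ Finset.range d, k.factorial) ∧
    (∏ i : Fin d, ((if (i : ℕ) = 0 then N - d + 1 else 1) + (d - 1 - (i : ℕ))).factorial
        = N.factorial * ∏ k ∈ Finset.range d, k.factorial) := by
  constructor
  · intro lam _ hpos hsum
    exact main_ineq d hd N hN lam hpos hsum
  · obtain ⟨e, rfl⟩ : ∃ e, d = e + 1 := ⟨d - 1, by omega⟩
    rw [Fin.prod_univ_succ]
    have h0 : ((if ((0 : Fin (e+1)) : ℕ) = 0 then N - (e + 1) + 1 else 1)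
        + (e + 1 - 1 - ((0 : Fin (e+1)) : ℕ))) = N := by
      simp only [Fin.val_zero, if_true, eq_self_iff_true]
      omega
    rw [h0]
    have hsucc : ∀ i : Fin e, ((if ((i.succ : Fin (e+1)) : ℕ) = 0 then N - (e + 1) + 1 else 1)
        + (e + 1 - 1 - ((i.succ : Fin (e+1)) : ℕ))).factorial = (e - (i : ℕ)).factorial := by
      intro i
      have h1 : ((i.succ : Fin (e+1)) : ℕ) = (i : ℕ) + 1 := rfl
      rw [h1, if_neg (by omega)]
      congr 1
      have := i.isLt
      omega
    rw [Finset.prod_congr rfl (fun i _ => hsucc i)]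
    have : ∏ i : Fin e, (e - (i : ℕ)).factorial = ∏ i ∈ Finset.range e, (e - i).factorial :=
      Fin.prod_univ_eq_prod_range (fun i => (e - i).factorial) e
    rw [this, prod_reflect_fact e]
end

section
/- Let d ≥ 2 be an integer. There exist constants 0 < m ≤ M and an integer N₀ such that for all N ≥ N₀, m · N^{3d−1} ≤ Σ_{λ' ∈ P_{N+1}} ∏_{j=1}^d p_j(λ')² ≤ M · N^{3d−1}. -/
open Finset

/-- The value after index `i` in `λ`, with the convention `λ_{d+1} := 0`. -/
def nextVal (d : ℕ) (lam : Fin d → ℕ) (i : Fin d) : ℕ :=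
  if h : (i : ℕ) + 1 < d then lam ⟨(i : ℕ) + 1, h⟩ else 0

/-- `Λ_M`: nonincreasing `d`-tuples of natural numbers summing to `M`. -/
def Lam (d M : ℕ) : Finset (Fin d → ℕ) :=
  (Fintype.piFinset fun _ => Finset.range (M + 1)).filter
    (fun lam => (∀ i : Fin d, nextVal d lam i ≤ lam i) ∧ ∑ j, lam j = M)

/-- `P_M`: strictly decreasing `d`-tuples of positive naturals summing to `M`. -/
def PP (d M : ℕ) : Finset (Fin d → ℕ) :=
  (Lam d M).filter (fun lam => ∀ i : Fin d, nextVal d lam i < lam i)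

/-- The gaps `p_j(λ) = λ_j - λ_{j+1}`. -/
def pgap (d : ℕ) (lam : Fin d → ℕ) (j : Fin d) : ℕ := lam j - nextVal d lam j

/-- `S(λ)`: the set of indices `i` with `λ_i > λ_{i+1}`. -/
def SS (d : ℕ) (lam : Fin d → ℕ) : Finset (Fin d) :=
  Finset.univ.filter (fun i => nextVal d lam i < lam i)

/-- `λ - e_i`: decrease the `i`-th entry by one. -/
def dec (d : ℕ) (lam : Fin d → ℕ) (i : Fin d) : Fin d → ℕ :=
  Function.update lam i (lam i - 1)

/-- The previous index `i - 1`. -/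
def prev (d : ℕ) (i : Fin d) : Fin d :=
  ⟨(i : ℕ) - 1, Nat.lt_of_le_of_lt (Nat.sub_le _ _) i.isLt⟩

/-- `p_E(λ) = ∏_{j ∉ E} p_j(λ)`. -/
def pE (d : ℕ) (lam : Fin d → ℕ) (E : Finset (Fin d)) : ℕ :=
  ∏ j ∈ Eᶜ, pgap d lam j

/-- `r_{λ'}(i) = -p_{{i}}(λ') + (p_{{i-1}}(λ') - p_{{i,i-1}}(λ')` if `i > 1`, else `0)`. -/
def rr (d : ℕ) (lam : Fin d → ℕ) (i : Fin d) : ℤ :=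
  -(pE d lam {i} : ℤ) +
    (if 0 < (i : ℕ) then
      ((pE d lam {prev d i} : ℤ) - (pE d lam ({i, prev d i} : Finset (Fin d)) : ℤ))
    else 0)

/-!
A strict partition `λ ∈ P_M` is the same thing as its gap vector `p = (p_1, …, p_d)` with all
`p_j ≥ 1` and `∑ j · p_j = M`, since `λ_i = p_i + … + p_d`.

Upper bound: `λ ∈ P_M` is determined by `λ_1, …, λ_{d-1} ≤ M`, so `#P_M ≤ (M+1)^{d-1}`, and every
gap is at most `M`, so each summand is at most `M^{2d}`.

Lower bound: with `K = ⌊N / c⌋` for a suitable `c = c(d)`, let `p_2, …, p_d` range over `[K, 2K)`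
and choose `p_1` to make the weighted sum `N + 1`; then `p_1 ≥ K` as well. This gives `K^{d-1}`
elements of `P_{N+1}` whose gaps are all at least `K`, each contributing at least `K^{2d}`.
-/

def ofGaps (d : ℕ) (p : Fin d → ℕ) (i : Fin d) : ℕ := ∑ k ∈ Ici i, p k

def gapSquareSum (d M : ℕ) : ℕ := ∑ lam ∈ PP d M, ∏ j, pgap d lam j ^ 2

lemma cast_gapSquareSum {R : Type*} [CommSemiring R] (d M : ℕ) :
    (gapSquareSum d M : R) = ∑ lam ∈ PP d M, ∏ j, (pgap d lam j : R) ^ 2 := by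
  simp [gapSquareSum]

section Gaps

variable {d : ℕ}

lemma nextVal_ofGaps (p : Fin d → ℕ) (i : Fin d) :
    nextVal d (ofGaps d p) i = ∑ k ∈ Ioi i, p k := by
  unfold nextVal
  split_ifs with h
  · refine Finset.sum_congr (Finset.ext fun k => ?_) fun _ _ => rfl
    simp only [mem_Ici, mem_Ioi, Fin.le_def, Fin.lt_def]
    omega
  · refine (Finset.sum_eq_zero fun k hk => ?_).symm
    rw [mem_Ioi, Fin.lt_def] at hk
    omega

lemma ofGaps_eq_add_nextVal (p : Fin d → ℕ) (i : Fin d) :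
    ofGaps d p i = p i + nextVal d (ofGaps d p) i := by
  rw [nextVal_ofGaps, ofGaps, ← Ioi_insert, sum_insert (by simp)]

@[simp]
lemma pgap_ofGaps (p : Fin d → ℕ) (i : Fin d) : pgap d (ofGaps d p) i = p i := by
  rw [pgap, ofGaps_eq_add_nextVal]
  omega

lemma ofGaps_injective : Function.Injective (ofGaps d) := fun p q h =>
  funext fun i => by rw [← pgap_ofGaps p i, ← pgap_ofGaps q i, h]

lemma sum_ofGaps (p : Fin d → ℕ) : ∑ i, ofGaps d p i = ∑ k : Fin d, ((k : ℕ) + 1) * p k := by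
  unfold ofGaps
  rw [sum_comm' (t' := univ) (s' := Iic) (by simp)]
  simp [Fin.card_Iic]

lemma ofGaps_mem_PP (p : Fin d → ℕ) (hp : ∀ k, 0 < p k) :
    ofGaps d p ∈ PP d (∑ k : Fin d, ((k : ℕ) + 1) * p k) := by
  have hlt : ∀ i, nextVal d (ofGaps d p) i < ofGaps d p i := fun i => by
    have := ofGaps_eq_add_nextVal p i
    have := hp i
    omega
  have hle : ∀ i, ofGaps d p i ≤ ∑ k : Fin d, ((k : ℕ) + 1) * p k := fun i => by
    rw [← sum_ofGaps]
    exact single_le_sum (fun _ _ => Nat.zero_le _) (mem_univ i)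
  simp only [PP, Lam, mem_filter, Fintype.mem_piFinset, mem_range, Nat.lt_succ_iff]
  exact ⟨⟨hle, fun i => (hlt i).le, sum_ofGaps p⟩, hlt⟩

end Gaps

section Bounds

variable {d M : ℕ} {lam : Fin d → ℕ}

lemma le_of_mem_PP (h : lam ∈ PP d M) (i : Fin d) : lam i ≤ M := by
  simp only [PP, Lam, mem_filter, Fintype.mem_piFinset, mem_range] at h
  exact Nat.lt_succ_iff.mp (h.1.1 i)

lemma sum_eq_of_mem_PP (h : lam ∈ PP d M) : ∑ j, lam j = M := by
  simp only [PP, Lam, mem_filter] at h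
  exact h.1.2.2

lemma pgap_le_of_mem_PP (h : lam ∈ PP d M) (i : Fin d) : pgap d lam i ≤ M :=
  (Nat.sub_le _ _).trans (le_of_mem_PP h i)

end Bounds

lemma card_PP_succ_le (n M : ℕ) : #(PP (n + 1) M) ≤ (M + 1) ^ n := by
  calc #(PP (n + 1) M) ≤ #(Fintype.piFinset fun _ : Fin n => range (M + 1)) := by
        refine card_le_card_of_injOn Fin.init (fun lam h => ?_) fun lam h lam' h' hinit => ?_
        · simpa [Fin.init, Nat.lt_succ_iff] using fun i => le_of_mem_PP h _
        · have hsum := (sum_eq_of_mem_PP h).trans (sum_eq_of_mem_PP h').symm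
          simp only [Fin.sum_univ_castSucc] at hsum
          have hinit' : ∀ i, lam (Fin.castSucc i) = lam' (Fin.castSucc i) :=
            fun i => congrFun hinit i
          simp only [hinit', add_right_inj] at hsum
          rw [← Fin.snoc_init_self lam, ← Fin.snoc_init_self lam', hinit, hsum]
    _ = (M + 1) ^ n := by simp

lemma gapSquareSum_le (n M : ℕ) : gapSquareSum (n + 1) M ≤ (M + 1) ^ (3 * n + 2) :=
  calc gapSquareSum (n + 1) M ≤ #(PP (n + 1) M) * ((M + 1) ^ 2) ^ (n + 1) := by
        refine sum_le_card_nsmul _ _ _ fun lam h => ?_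
        calc ∏ j, pgap (n + 1) lam j ^ 2 ≤ ∏ _j : Fin (n + 1), (M + 1) ^ 2 :=
              prod_le_prod' fun j _ =>
                Nat.pow_le_pow_left (Nat.le_succ_of_le (pgap_le_of_mem_PP h j)) 2
          _ = ((M + 1) ^ 2) ^ (n + 1) := by simp
    _ ≤ (M + 1) ^ n * ((M + 1) ^ 2) ^ (n + 1) := by gcongr; exact card_PP_succ_le n M
    _ = (M + 1) ^ (3 * n + 2) := by rw [← pow_mul, ← pow_add]; ring_nf

def consGaps (n M : ℕ) (q : Fin n → ℕ) : Fin (n + 1) → ℕ :=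
  Fin.cons (M - ∑ k : Fin n, ((k : ℕ) + 2) * q k) q

lemma weightedSum_consGaps {n M : ℕ} {q : Fin n → ℕ}
    (hq : ∑ k : Fin n, ((k : ℕ) + 2) * q k ≤ M) :
    ∑ k : Fin (n + 1), ((k : ℕ) + 1) * consGaps n M q k = M := by
  simp only [consGaps, Fin.sum_univ_succ, Fin.cons_zero, Fin.cons_succ, Fin.val_zero,
    Fin.val_succ, add_assoc, one_add_one_eq_two]
  omega

lemma weightedSum_le_of_forall_lt {n K : ℕ} {q : Fin n → ℕ} (hq : ∀ k, q k < 2 * K) :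
    ∑ k : Fin n, ((k : ℕ) + 2) * q k ≤ 2 * n * (n + 1) * K :=
  calc ∑ k : Fin n, ((k : ℕ) + 2) * q k ≤ ∑ _k : Fin n, (n + 1) * (2 * K) :=
        sum_le_sum fun k _ => Nat.mul_le_mul (by omega) (hq k).le
    _ = 2 * n * (n + 1) * K := by
      simp only [sum_const, card_univ, Fintype.card_fin, smul_eq_mul]; ring

lemma pow_le_gapSquareSum {n K M : ℕ} (hK : 0 < K) (hM : (2 * n * (n + 1) + 1) * K ≤ M) :
    K ^ (3 * n + 2) ≤ gapSquareSum (n + 1) M := by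
  set B := Fintype.piFinset fun _ : Fin n => Ico K (2 * K)
  have hB : ∀ q ∈ B, ∀ k, K ≤ q k ∧ q k < 2 * K := by simp [B]
  have hW : ∀ q ∈ B, ∑ k : Fin n, ((k : ℕ) + 2) * q k + K ≤ M := fun q hq => by
    have := weightedSum_le_of_forall_lt fun k => (hB q hq k).2
    rw [add_one_mul] at hM
    omega
  have hgap : ∀ q ∈ B, ∀ j, K ≤ consGaps n M q j := fun q hq j => by
    refine Fin.cases ?_ (fun k => ?_) j
    · simp only [consGaps, Fin.cons_zero]; have := hW q hq; omega
    · simpa [consGaps] using (hB q hq k).1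
  have hmem : ∀ q ∈ B, ofGaps (n + 1) (consGaps n M q) ∈ PP (n + 1) M := fun q hq => by
    have h := ofGaps_mem_PP _ fun j => hK.trans_le (hgap q hq j)
    rwa [weightedSum_consGaps (by have := hW q hq; omega)] at h
  have hinj : Set.InjOn (fun q => ofGaps (n + 1) (consGaps n M q)) B :=
    fun q _ q' _ h => by simpa [consGaps] using congrArg Fin.tail (ofGaps_injective h)
  calc K ^ (3 * n + 2) = #B * (K ^ 2) ^ (n + 1) := by
        simp only [B, Fintype.card_piFinset, Nat.card_Ico, show 2 * K - K = K by omega, prod_const,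
          card_univ, Fintype.card_fin]
        ring
    _ ≤ ∑ q ∈ B, ∏ j, pgap (n + 1) (ofGaps (n + 1) (consGaps n M q)) j ^ 2 := by
        refine card_nsmul_le_sum _ _ _ fun q hq => ?_
        calc (K ^ 2) ^ (n + 1) = ∏ _j : Fin (n + 1), K ^ 2 := by simp
          _ ≤ _ := prod_le_prod' fun j _ => by simpa using Nat.pow_le_pow_left (hgap q hq j) 2
    _ = ∑ lam ∈ B.image fun q => ofGaps (n + 1) (consGaps n M q), ∏ j, pgap (n + 1) lam j ^ 2 := by
        rw [sum_image hinj]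
    _ ≤ gapSquareSum (n + 1) M :=
        sum_le_sum_of_subset (image_subset_iff.mpr hmem)

/-- there are `0 < m ≤ M` and `N₀` with
`m·N^{3d-1} ≤ Σ_{λ'∈P_{N+1}} ∏_j p_j(λ')² ≤ M·N^{3d-1}` for all `N ≥ N₀`. -/
theorem stmt10 (d : ℕ) (hd : 2 ≤ d) :
    ∃ m M : ℝ, 0 < m ∧ m ≤ M ∧ ∃ N₀ : ℕ, ∀ N : ℕ, N₀ ≤ N →
      m * (N : ℝ) ^ (3 * d - 1)
          ≤ (∑ lam' ∈ PP d (N + 1), ∏ j, (pgap d lam' j : ℝ) ^ 2) ∧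
      (∑ lam' ∈ PP d (N + 1), ∏ j, (pgap d lam' j : ℝ) ^ 2)
          ≤ M * (N : ℝ) ^ (3 * d - 1) := by
  obtain ⟨n, rfl⟩ : ∃ n, d = n + 1 := ⟨d - 1, by omega⟩
  rw [show 3 * (n + 1) - 1 = 3 * n + 2 by omega]
  set c := 2 * n * (n + 1) + 1
  set e := 3 * n + 2
  refine ⟨((2 * c : ℝ) ^ e)⁻¹, 3 ^ e, by positivity, ?_, c, fun N hN => ?_⟩
  · exact (inv_le_one_of_one_le₀ (one_le_pow₀ (by norm_cast; omega))).trans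
      (one_le_pow₀ (by norm_num))
  simp only [← cast_gapSquareSum]
  constructor
  · have hK : 0 < N / c := Nat.div_pos hN (by omega)
    have hKN : N ≤ 2 * c * (N / c) := by
      have := Nat.lt_mul_div_succ N (show 0 < c by omega)
      nlinarith
    have hlow : N ^ e ≤ (2 * c) ^ e * gapSquareSum (n + 1) (N + 1) :=
      calc N ^ e ≤ (2 * c) ^ e * (N / c) ^ e := by rw [← mul_pow]; exact Nat.pow_le_pow_left hKN e
        _ ≤ _ := Nat.mul_le_mul_left _ <| pow_le_gapSquareSum hK <|
          (Nat.mul_div_le N c).trans N.le_succ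
    rw [inv_mul_le_iff₀ (by positivity)]
    exact_mod_cast hlow
  · have hup : gapSquareSum (n + 1) (N + 1) ≤ 3 ^ e * N ^ e :=
      calc gapSquareSum (n + 1) (N + 1) ≤ (N + 1 + 1) ^ e := gapSquareSum_le n (N + 1)
        _ ≤ (3 * N) ^ e := Nat.pow_le_pow_left (by omega) e
        _ = 3 ^ e * N ^ e := mul_pow _ _ _
    exact_mod_cast hup
end

section
/- Let d ≥ 2 be an integer. There exist a constant K and an integer N₀ such that for all N ≥ N₀, |Σ_{λ' ∈ Λ_{N+1}} Σ_{i ∈ S(λ')} #S(λ') · r_{λ'}(i) · ∏_{j=1}^d p_j(λ')| ≤ (K/N) · Σ_{λ' ∈ Λ_{N+1}} (#S(λ'))² · ∏_{j=1}^d p_j(λ')². (In the notation of the paper's Lemma 1, t₁ = O(N^{−1}).) -/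
open Finset

lemma mem_Lam_iff {d m : ℕ} {lam : Fin d → ℕ} :
    lam ∈ Lam d m ↔ (∀ i : Fin d, nextVal d lam i ≤ lam i) ∧ ∑ j, lam j = m := by
  constructor
  · intro h; exact (Finset.mem_filter.1 h).2
  · intro h
    refine Finset.mem_filter.2 ⟨?_, h⟩
    refine Fintype.mem_piFinset.2 fun i => Finset.mem_range.2 ?_
    have : lam i ≤ ∑ j, lam j := Finset.single_le_sum (fun j _ => Nat.zero_le _) (Finset.mem_univ i)
    omega

lemma lam_le {d m : ℕ} {lam : Fin d → ℕ} (h : lam ∈ Lam d m) (i : Fin d) : lam i ≤ m := by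
  have h2 := (mem_Lam_iff.1 h).2
  have : lam i ≤ ∑ j, lam j := Finset.single_le_sum (fun j _ => Nat.zero_le _) (Finset.mem_univ i)
  omega

lemma pgap_le {d m : ℕ} {lam : Fin d → ℕ} (h : lam ∈ Lam d m) (i : Fin d) : pgap d lam i ≤ m :=
  le_trans (Nat.sub_le _ _) (lam_le h i)

lemma pE_le {d m : ℕ} {lam : Fin d → ℕ} (h : lam ∈ Lam d m) (hm : 1 ≤ m)
    {E : Finset (Fin d)} (hE : E.Nonempty) : pE d lam E ≤ m ^ (d - 1) := by
  have h1 : pE d lam E ≤ ∏ _j ∈ Eᶜ, m :=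
    Finset.prod_le_prod' (fun j _ => pgap_le h j)
  have h2 : (∏ _j ∈ Eᶜ, m) = m ^ Eᶜ.card := Finset.prod_const m
  have h3 : Eᶜ.card ≤ d - 1 := by
    have := Finset.card_compl E
    have hc : 1 ≤ E.card := Finset.one_le_card.2 hE
    have : Eᶜ.card = Fintype.card (Fin d) - E.card := Finset.card_compl E
    simp only [Fintype.card_fin] at this
    omega
  calc pE d lam E ≤ m ^ Eᶜ.card := by rw [← h2]; exact h1
    _ ≤ m ^ (d - 1) := Nat.pow_le_pow_right hm h3

lemma rr_abs_le {d m : ℕ} {lam : Fin d → ℕ} (h : lam ∈ Lam d m) (hm : 1 ≤ m) (i : Fin d) :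
    |rr d lam i| ≤ 3 * (m : ℤ) ^ (d - 1) := by
  have b1 : (pE d lam {i} : ℤ) ≤ (m : ℤ) ^ (d - 1) := by
    exact_mod_cast pE_le h hm ⟨i, Finset.mem_singleton_self i⟩
  have b2 : (pE d lam {prev d i} : ℤ) ≤ (m : ℤ) ^ (d - 1) := by
    exact_mod_cast pE_le h hm ⟨prev d i, Finset.mem_singleton_self _⟩
  have b3 : (pE d lam ({i, prev d i} : Finset (Fin d)) : ℤ) ≤ (m : ℤ) ^ (d - 1) := by
    exact_mod_cast pE_le h hm ⟨i, Finset.mem_insert_self _ _⟩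
  have p1 : (0:ℤ) ≤ (pE d lam {i} : ℤ) := Int.natCast_nonneg _
  have p2 : (0:ℤ) ≤ (pE d lam {prev d i} : ℤ) := Int.natCast_nonneg _
  have p3 : (0:ℤ) ≤ (pE d lam ({i, prev d i} : Finset (Fin d)) : ℤ) := Int.natCast_nonneg _
  have pw : (0:ℤ) ≤ (m:ℤ) ^ (d-1) := by positivity
  unfold rr
  split <;> rw [abs_le] <;> constructor <;> linarith

lemma card_Lam_le {e m : ℕ} : (Lam (e+1) m).card ≤ (m+1) ^ e := by
  have : (Lam (e+1) m).card ≤ (Fintype.piFinset fun _ : Fin e => Finset.range (m + 1)).card := by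
    apply Finset.card_le_card_of_injOn (fun lam => lam ∘ Fin.castSucc)
    · intro lam hl
      refine Fintype.mem_piFinset.2 fun i => Finset.mem_range.2 ?_
      have := lam_le hl (Fin.castSucc i)
      simpa using Nat.lt_succ_of_le this
    · intro a ha b hb hab
      have hsa := (mem_Lam_iff.1 ha).2
      have hsb := (mem_Lam_iff.1 hb).2
      rw [Fin.sum_univ_castSucc] at hsa hsb
      have hcs : ∀ i : Fin e, a i.castSucc = b i.castSucc := fun i => congrFun hab i
      have hlast : a (Fin.last e) = b (Fin.last e) := by
        have : ∑ i : Fin e, a i.castSucc = ∑ i : Fin e, b i.castSucc :=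
          Finset.sum_congr rfl (fun i _ => hcs i)
        omega
      funext i
      refine Fin.lastCases ?_ ?_ i
      · exact hlast
      · exact hcs
  simpa using this

/-- construct `λ` from the gap sequence `g`: `λ_i = Σ_{j ≥ i} g j`. -/
def lamOf (d : ℕ) (g : Fin d → ℕ) (i : Fin d) : ℕ :=
  ∑ j : Fin d, if i ≤ j then g j else 0

lemma nextVal_lamOf (d : ℕ) (g : Fin d → ℕ) (i : Fin d) :
    nextVal d (lamOf d g) i = ∑ j : Fin d, if i < j then g j else 0 := by
  unfold nextVal
  split
  · rename_i h
    unfold lamOf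
    apply Finset.sum_congr rfl
    intro j _
    have he : ((⟨(i:ℕ)+1, h⟩ : Fin d) ≤ j) ↔ i < j := by
      rw [Fin.le_def, Fin.lt_def]
      exact Nat.succ_le_iff
    exact if_congr he rfl rfl
  · rename_i h
    symm
    apply Finset.sum_eq_zero
    intro j _
    have : ¬ i < j := by
      intro hc
      rw [Fin.lt_def] at hc
      have := j.isLt
      omega
    simp [this]

lemma lamOf_eq (d : ℕ) (g : Fin d → ℕ) (i : Fin d) :
    lamOf d g i = g i + nextVal d (lamOf d g) i := by
  rw [nextVal_lamOf]
  unfold lamOf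
  have : ∀ j : Fin d, (if i ≤ j then g j else 0)
      = (if i = j then g j else 0) + (if i < j then g j else 0) := by
    intro j
    rcases lt_trichotomy i j with h | h | h
    · rw [if_pos h.le, if_neg h.ne, if_pos h, zero_add]
    · subst h; simp
    · rw [if_neg (not_le.2 h), if_neg (ne_of_gt h), if_neg (not_lt.2 h.le)]
  rw [Finset.sum_congr rfl (fun j _ => this j), Finset.sum_add_distrib,
    Finset.sum_ite_eq univ i g]
  simp

lemma pgap_lamOf (d : ℕ) (g : Fin d → ℕ) (i : Fin d) :
    pgap d (lamOf d g) i = g i := by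
  unfold pgap
  rw [lamOf_eq d g i]
  omega

lemma sum_lamOf (d : ℕ) (g : Fin d → ℕ) :
    ∑ i, lamOf d g i = ∑ j : Fin d, ((j : ℕ) + 1) * g j := by
  unfold lamOf
  rw [Finset.sum_comm]
  apply Finset.sum_congr rfl
  intro j _
  have h1 : (∑ x : Fin d, if x ≤ j then g j else 0)
      = (univ.filter (fun x : Fin d => x ≤ j)).card * g j := by
    rw [Finset.sum_ite, Finset.sum_const, Finset.sum_const_zero, add_zero, smul_eq_mul]
  have h2 : (univ.filter (fun x : Fin d => x ≤ j)) = Finset.Iic j := by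
    ext x; simp
  rw [h1, h2, Fin.card_Iic]

lemma L_abs_le (e m : ℕ) (hm1 : 1 ≤ m) :
    |∑ lam' ∈ Lam (e+2) m, ∑ i ∈ SS (e+2) lam',
        ((SS (e+2) lam').card : ℝ) * (rr (e+2) lam' i : ℝ) * ∏ j, (pgap (e+2) lam' j : ℝ)|
      ≤ ((m:ℝ)+1)^(e+1) * (3*((e:ℝ)+2)^2) * (m:ℝ)^(2*e+3) := by
  set B : ℝ := ((e:ℝ)+2) * (3*(m:ℝ)^(e+1)) * (m:ℝ)^(e+2) with hB
  have hterm : ∀ lam' ∈ Lam (e+2) m, ∀ i : Fin (e+2),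
      |((SS (e+2) lam').card : ℝ) * (rr (e+2) lam' i : ℝ) * ∏ j, (pgap (e+2) lam' j : ℝ)|
        ≤ B := by
    intro lam' hl i
    rw [abs_mul, abs_mul]
    have h1 : |((SS (e+2) lam').card : ℝ)| ≤ (e:ℝ)+2 := by
      rw [abs_of_nonneg (by positivity)]
      have h : (SS (e+2) lam').card ≤ e+2 := by
        calc (SS (e+2) lam').card ≤ (univ : Finset (Fin (e+2))).card := Finset.card_filter_le _ _
          _ = e+2 := by simp
      exact_mod_cast h
    have h2 : |(rr (e+2) lam' i : ℝ)| ≤ 3*(m:ℝ)^(e+1) := by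
      have hr := rr_abs_le hl hm1 i
      have h3 : (e+2) - 1 = e+1 := rfl
      rw [h3] at hr
      calc |((rr (e+2) lam' i : ℤ) : ℝ)| = ((|rr (e+2) lam' i| : ℤ) : ℝ) := by
            rw [Int.cast_abs]
        _ ≤ (((3 * (m:ℤ)^(e+1) : ℤ)) : ℝ) := by exact_mod_cast hr
        _ = 3*(m:ℝ)^(e+1) := by push_cast; ring
    have h3 : |∏ j, (pgap (e+2) lam' j : ℝ)| ≤ (m:ℝ)^(e+2) := by
      rw [abs_of_nonneg (Finset.prod_nonneg (fun j _ => by positivity))]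
      calc ∏ j, (pgap (e+2) lam' j : ℝ) ≤ ∏ _j : Fin (e+2), (m:ℝ) := by
            apply Finset.prod_le_prod (fun j _ => by positivity)
            intro j _; exact_mod_cast pgap_le hl j
        _ = (m:ℝ)^(e+2) := by simp
    exact mul_le_mul (mul_le_mul h1 h2 (abs_nonneg _) (by positivity)) h3 (abs_nonneg _)
      (by positivity)
  have hBpos : 0 ≤ B := by positivity
  calc |∑ lam' ∈ Lam (e+2) m, ∑ i ∈ SS (e+2) lam',
        ((SS (e+2) lam').card : ℝ) * (rr (e+2) lam' i : ℝ) * ∏ j, (pgap (e+2) lam' j : ℝ)|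
      ≤ ∑ lam' ∈ Lam (e+2) m, |∑ i ∈ SS (e+2) lam',
        ((SS (e+2) lam').card : ℝ) * (rr (e+2) lam' i : ℝ) * ∏ j, (pgap (e+2) lam' j : ℝ)| :=
        Finset.abs_sum_le_sum_abs _ _
    _ ≤ ∑ lam' ∈ Lam (e+2) m, ∑ i ∈ SS (e+2) lam',
        |((SS (e+2) lam').card : ℝ) * (rr (e+2) lam' i : ℝ) * ∏ j, (pgap (e+2) lam' j : ℝ)| :=
        Finset.sum_le_sum (fun lam' _ => Finset.abs_sum_le_sum_abs _ _)
    _ ≤ ∑ lam' ∈ Lam (e+2) m, ∑ _i ∈ SS (e+2) lam', B :=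
        Finset.sum_le_sum (fun lam' hl => Finset.sum_le_sum (fun i _ => hterm lam' hl i))
    _ ≤ ∑ _lam' ∈ Lam (e+2) m, ((e:ℝ)+2) * B := by
        apply Finset.sum_le_sum
        intro lam' _
        rw [Finset.sum_const, nsmul_eq_mul]
        apply mul_le_mul_of_nonneg_right _ hBpos
        have h : (SS (e+2) lam').card ≤ e+2 := by
          calc (SS (e+2) lam').card ≤ (univ : Finset (Fin (e+2))).card := Finset.card_filter_le _ _
            _ = e+2 := by simp
        exact_mod_cast h
    _ = ((Lam (e+2) m).card : ℝ) * (((e:ℝ)+2) * B) := by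
        rw [Finset.sum_const, nsmul_eq_mul]
    _ ≤ ((m:ℝ)+1)^(e+1) * (((e:ℝ)+2) * B) := by
        apply mul_le_mul_of_nonneg_right _ (by positivity)
        have h := card_Lam_le (e := e+1) (m := m)
        calc ((Lam (e+2) m).card : ℝ) ≤ (((m+1)^(e+1) : ℕ) : ℝ) := by exact_mod_cast h
          _ = ((m:ℝ)+1)^(e+1) := by push_cast; ring
    _ = ((m:ℝ)+1)^(e+1) * (3*((e:ℝ)+2)^2) * (m:ℝ)^(2*e+3) := by
        rw [hB, show 2*e+3 = (e+1)+(e+2) by ring, pow_add]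
        ring

set_option maxHeartbeats 1000000 in
lemma R_lower (e m : ℕ) (hm : 8*(e+2)^2 ≤ m) :
    ((m / (4*(e+2)^2) : ℕ) : ℝ)^(3*e+5)
      ≤ ∑ lam' ∈ Lam (e+2) m,
          ((SS (e+2) lam').card : ℝ)^2 * ∏ j, (pgap (e+2) lam' j : ℝ)^2 := by
  set c := 4*(e+2)^2 with hc
  set s := m / c with hsdef
  have hcpos : 0 < c := by positivity
  have h4c : 4 ≤ c := by
    have h1 : 1 ≤ (e+2)^2 := Nat.one_le_pow _ _ (by omega)
    omega
  have hs1 : 1 ≤ s := (Nat.one_le_div_iff hcpos).2 (by omega)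
  have hcsm : c * s ≤ m := by
    rw [hsdef, mul_comm]; exact Nat.div_mul_le_self m c
  have h4s : 4 * s ≤ c * s := Nat.mul_le_mul_right s h4c
  -- the family
  set KK := Fintype.piFinset (fun _ : Fin (e+1) => Finset.range s) with hKK
  set tf : (Fin (e+1) → ℕ) → ℕ := fun k => ∑ j : Fin (e+1), ((j:ℕ)+1+1)*(s + k j) with htf
  set g : (Fin (e+1) → ℕ) → Fin (e+2) → ℕ :=
    fun k => Fin.cons (m - tf k) (fun j => s + k j) with hg
  set Phi : (Fin (e+1) → ℕ) → (Fin (e+2) → ℕ) := fun k => lamOf (e+2) (g k) with hPhi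
  have hPhi' : ∀ k, Phi k = lamOf (e+2) (g k) := fun _ => rfl
  have hkmem : ∀ k ∈ KK, ∀ j : Fin (e+1), k j < s := by
    intro k hk j
    exact Finset.mem_range.1 (Fintype.mem_piFinset.1 hk j)
  have htk : ∀ k ∈ KK, 2 * tf k ≤ c * s := by
    intro k hk
    have h1 : tf k ≤ ∑ _j : Fin (e+1), (e+2)*(2*s) := by
      apply Finset.sum_le_sum
      intro j _
      have := j.isLt
      have := hkmem k hk j
      exact Nat.mul_le_mul (by omega) (by omega)
    have h2 : (∑ _j : Fin (e+1), (e+2)*(2*s)) = (e+1)*((e+2)*(2*s)) := by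
      rw [Finset.sum_const, smul_eq_mul]; simp
    have h3 : 2*((e+1)*((e+2)*(2*s))) ≤ c * s := by
      have h4 : (e+1)*((e+2)*(2*s)) ≤ (e+2)*((e+2)*(2*s)) :=
        Nat.mul_le_mul (by omega) le_rfl
      calc 2*((e+1)*((e+2)*(2*s))) ≤ 2*((e+2)*((e+2)*(2*s))) := by omega
        _ = c * s := by rw [hc]; ring
    omega
  have hp1 : ∀ k ∈ KK, s ≤ m - tf k := by
    intro k hk
    have := htk k hk
    omega
  have hgs : ∀ k ∈ KK, ∀ i : Fin (e+2), s ≤ g k i := by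
    intro k hk i
    refine Fin.cases ?_ ?_ i
    · rw [hg]; simpa using hp1 k hk
    · intro j; rw [hg]; simp
  have hpg : ∀ k, ∀ i, pgap (e+2) (Phi k) i = g k i := by
    intro k i; rw [hPhi' k]; exact pgap_lamOf _ _ _
  have hmem : ∀ k ∈ KK, Phi k ∈ Lam (e+2) m := by
    intro k hk
    refine mem_Lam_iff.2 ⟨?_, ?_⟩
    · intro i
      have h := lamOf_eq (e+2) (g k) i
      rw [hPhi' k]
      omega
    · rw [hPhi' k, sum_lamOf, Fin.sum_univ_succ]
      have h0 : g k 0 = m - tf k := by rw [hg]; simp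
      have hsucc : ∀ j : Fin (e+1), ((j.succ : ℕ) + 1) * g k j.succ
          = ((j:ℕ)+1+1)*(s + k j) := by
        intro j
        rw [hg]
        simp [Fin.val_succ]
      rw [Finset.sum_congr rfl (fun j _ => hsucc j), h0]
      have h2 : ∑ j : Fin (e+1), ((j:ℕ)+1+1)*(s + k j) = tf k := rfl
      rw [h2]
      have := htk k hk
      simp only [Fin.val_zero]
      omega
  have hSSuniv : ∀ k ∈ KK, SS (e+2) (Phi k) = univ := by
    intro k hk
    apply Finset.eq_univ_of_forall
    intro i
    unfold SS
    refine Finset.mem_filter.2 ⟨Finset.mem_univ _, ?_⟩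
    have h := lamOf_eq (e+2) (g k) i
    have h2 := hgs k hk i
    rw [hPhi' k]
    omega
  have hinj : ∀ a ∈ KK, ∀ b ∈ KK, Phi a = Phi b → a = b := by
    intro a _ b _ hab
    funext j
    have h1 : pgap (e+2) (Phi a) j.succ = pgap (e+2) (Phi b) j.succ := by rw [hab]
    rw [hpg, hpg, hg] at h1
    simpa using h1
  -- assemble
  have hsub : KK.image Phi ⊆ Lam (e+2) m := by
    intro x hx
    obtain ⟨k, hk, rfl⟩ := Finset.mem_image.1 hx
    exact hmem k hk
  calc ((s:ℕ):ℝ)^(3*e+5) = ((s:ℝ)^(e+1)) * ((s:ℝ)^(2*e+4)) := by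
        rw [← pow_add]; congr 1; omega
    _ = ∑ _k ∈ KK, (s:ℝ)^(2*e+4) := by
        rw [Finset.sum_const, nsmul_eq_mul]
        congr 1
        rw [hKK, Fintype.card_piFinset]
        simp
    _ ≤ ∑ k ∈ KK, ((SS (e+2) (Phi k)).card : ℝ)^2 * ∏ j, (pgap (e+2) (Phi k) j : ℝ)^2 := by
        apply Finset.sum_le_sum
        intro k hk
        have hcard : ((SS (e+2) (Phi k)).card : ℝ)^2 = ((e:ℝ)+2)^2 := by
          rw [hSSuniv k hk, Finset.card_univ, Fintype.card_fin]
          push_cast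
          try ring
        rw [hcard]
        have hprod : (s:ℝ)^(2*e+4) ≤ ∏ j, (pgap (e+2) (Phi k) j : ℝ)^2 := by
          calc (s:ℝ)^(2*e+4) = ∏ _j : Fin (e+2), (s:ℝ)^2 := by
                have h24 : 2*(e+2) = 2*e+4 := by ring
                rw [Finset.prod_const, Finset.card_univ, Fintype.card_fin, ← pow_mul, h24]
            _ ≤ ∏ j, (pgap (e+2) (Phi k) j : ℝ)^2 := by
                apply Finset.prod_le_prod (fun j _ => by positivity)
                intro j _
                have := hgs k hk j
                rw [hpg]
                have hle : (s:ℝ) ≤ (g k j : ℝ) := by exact_mod_cast this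
                have h0 : (0:ℝ) ≤ (s:ℝ) := by positivity
                nlinarith
        calc (s:ℝ)^(2*e+4) ≤ ∏ j, (pgap (e+2) (Phi k) j : ℝ)^2 := hprod
          _ ≤ ((e:ℝ)+2)^2 * ∏ j, (pgap (e+2) (Phi k) j : ℝ)^2 := by
              have hp : (0:ℝ) ≤ ∏ j, (pgap (e+2) (Phi k) j : ℝ)^2 :=
                Finset.prod_nonneg (fun j _ => by positivity)
              have h1 : (1:ℝ) ≤ ((e:ℝ)+2)^2 := by nlinarith [Nat.cast_nonneg (α := ℝ) e]
              nlinarith [hp, h1]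
    _ = ∑ x ∈ KK.image Phi, ((SS (e+2) x).card : ℝ)^2 * ∏ j, (pgap (e+2) x j : ℝ)^2 :=
        (Finset.sum_image (f := fun x => ((SS (e+2) x).card : ℝ)^2
          * ∏ j, (pgap (e+2) x j : ℝ)^2) (g := Phi) hinj).symm
    _ ≤ ∑ lam' ∈ Lam (e+2) m,
          ((SS (e+2) lam').card : ℝ)^2 * ∏ j, (pgap (e+2) lam' j : ℝ)^2 := by
        apply Finset.sum_le_sum_of_subset_of_nonneg hsub
        intro x _ _
        have hp : (0:ℝ) ≤ ∏ j, (pgap (e+2) x j : ℝ)^2 :=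
          Finset.prod_nonneg (fun j _ => by positivity)
        positivity


/-- t₁ = O(1/N): there are `K` and `N₀` such that for all `N ≥ N₀`,
`|Σ_{λ'} Σ_{i∈S(λ')} #S(λ')·r_{λ'}(i)·∏_j p_j(λ')| ≤ (K/N)·Σ_{λ'} (#S(λ'))²·∏_j p_j(λ')²`. -/
theorem stmt11 (d : ℕ) (hd : 2 ≤ d) :
    ∃ K : ℝ, ∃ N₀ : ℕ, ∀ N : ℕ, N₀ ≤ N →
      |∑ lam' ∈ Lam d (N + 1), ∑ i ∈ SS d lam',
          ((SS d lam').card : ℝ) * (rr d lam' i : ℝ) * ∏ j, (pgap d lam' j : ℝ)|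
        ≤ (K / N) * ∑ lam' ∈ Lam d (N + 1),
            ((SS d lam').card : ℝ) ^ 2 * ∏ j, (pgap d lam' j : ℝ) ^ 2 := by
  obtain ⟨e, rfl⟩ : ∃ e, d = e + 2 := ⟨d - 2, by omega⟩
  refine ⟨3*((e:ℝ)+2)^2 * 4^(3*e+4) * (8*((e:ℝ)+2)^2)^(3*e+5), 8*(e+2)^2, ?_⟩
  intro N hN
  have hb : 1 ≤ (e+2)^2 := Nat.one_le_pow _ _ (by omega)
  have hNpos : 0 < N := by omega
  set m := N + 1 with hmdef
  have hm8 : 8*(e+2)^2 ≤ m := by omega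
  set s := m / (4*(e+2)^2) with hs
  -- nat bound m ≤ 8(e+2)² s
  have hkey : m ≤ 8*(e+2)^2 * s := by
    have h1 := Nat.div_add_mod m (4*(e+2)^2)
    have h2 : m % (4*(e+2)^2) < 4*(e+2)^2 := Nat.mod_lt _ (by positivity)
    have h3 : 8*(e+2)^2 * s = 2*(4*(e+2)^2 * (m / (4*(e+2)^2))) := by rw [hs]; ring
    rw [h3]
    omega
  set R : ℝ := ∑ lam' ∈ Lam (e+2) m,
      ((SS (e+2) lam').card : ℝ)^2 * ∏ j, (pgap (e+2) lam' j : ℝ)^2 with hR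
  have hRlow : ((s:ℕ):ℝ)^(3*e+5) ≤ R := R_lower e m hm8
  have hL := L_abs_le e m (by omega)
  have hNr : (0:ℝ) < (N:ℝ) := by exact_mod_cast hNpos
  have hc2pos : (0:ℝ) < (8*((e:ℝ)+2)^2)^(3*e+5) := by positivity
  -- real bound N ≤ 8(e+2)² s
  have hsR : (N:ℝ) ≤ 8*((e:ℝ)+2)^2 * (s:ℝ) := by
    have h1 : (N:ℕ) ≤ 8*(e+2)^2 * s := by omega
    calc (N:ℝ) ≤ ((8*(e+2)^2 * s : ℕ) : ℝ) := by exact_mod_cast h1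
      _ = 8*((e:ℝ)+2)^2 * (s:ℝ) := by push_cast; ring
  have hRlow2 : (N:ℝ)^(3*e+5) ≤ (8*((e:ℝ)+2)^2)^(3*e+5) * R := by
    calc (N:ℝ)^(3*e+5) ≤ (8*((e:ℝ)+2)^2 * (s:ℝ))^(3*e+5) := by
          apply pow_le_pow_left₀ (by positivity) hsR
      _ = (8*((e:ℝ)+2)^2)^(3*e+5) * ((s:ℝ))^(3*e+5) := mul_pow _ _ _
      _ ≤ (8*((e:ℝ)+2)^2)^(3*e+5) * R :=
          mul_le_mul_of_nonneg_left hRlow (le_of_lt hc2pos)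
  -- upper bound in terms of N
  have hm4 : ((m:ℝ)) ≤ 4*(N:ℝ) := by
    have : (m:ℕ) ≤ 4*N := by omega
    exact_mod_cast this
  have hm41 : ((m:ℝ))+1 ≤ 4*(N:ℝ) := by
    have : (m:ℕ)+1 ≤ 4*N := by omega
    calc ((m:ℝ))+1 = (((m:ℕ)+1 : ℕ) : ℝ) := by push_cast; ring
      _ ≤ ((4*N : ℕ) : ℝ) := by exact_mod_cast this
      _ = 4*(N:ℝ) := by push_cast; ring
  have hLup : |∑ lam' ∈ Lam (e+2) m, ∑ i ∈ SS (e+2) lam',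
        ((SS (e+2) lam').card : ℝ) * (rr (e+2) lam' i : ℝ) * ∏ j, (pgap (e+2) lam' j : ℝ)|
      ≤ 3*((e:ℝ)+2)^2 * 4^(3*e+4) * (N:ℝ)^(3*e+4) := by
    have step : ((m:ℝ)+1)^(e+1) * (3*((e:ℝ)+2)^2) * (m:ℝ)^(2*e+3)
        ≤ (4*(N:ℝ))^(e+1) * (3*((e:ℝ)+2)^2) * (4*(N:ℝ))^(2*e+3) := by
      have hmn : (0:ℝ) ≤ (m:ℝ) := by positivity
      gcongr
    have heq : (4*(N:ℝ))^(e+1) * (3*((e:ℝ)+2)^2) * (4*(N:ℝ))^(2*e+3)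
        = 3*((e:ℝ)+2)^2 * 4^(3*e+4) * (N:ℝ)^(3*e+4) := by
      have h1 : (4*(N:ℝ))^(e+1) * (4*(N:ℝ))^(2*e+3) = (4:ℝ)^(3*e+4) * (N:ℝ)^(3*e+4) := by
        rw [← pow_add, show (e+1)+(2*e+3) = 3*e+4 by ring, mul_pow]
      calc (4*(N:ℝ))^(e+1) * (3*((e:ℝ)+2)^2) * (4*(N:ℝ))^(2*e+3)
          = ((4*(N:ℝ))^(e+1) * (4*(N:ℝ))^(2*e+3)) * (3*((e:ℝ)+2)^2) := by ring
        _ = ((4:ℝ)^(3*e+4) * (N:ℝ)^(3*e+4)) * (3*((e:ℝ)+2)^2) := by rw [h1]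
        _ = 3*((e:ℝ)+2)^2 * 4^(3*e+4) * (N:ℝ)^(3*e+4) := by ring
    calc |∑ lam' ∈ Lam (e+2) m, ∑ i ∈ SS (e+2) lam',
        ((SS (e+2) lam').card : ℝ) * (rr (e+2) lam' i : ℝ) * ∏ j, (pgap (e+2) lam' j : ℝ)|
        ≤ ((m:ℝ)+1)^(e+1) * (3*((e:ℝ)+2)^2) * (m:ℝ)^(2*e+3) := hL
      _ ≤ (4*(N:ℝ))^(e+1) * (3*((e:ℝ)+2)^2) * (4*(N:ℝ))^(2*e+3) := step
      _ = 3*((e:ℝ)+2)^2 * 4^(3*e+4) * (N:ℝ)^(3*e+4) := heq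
  -- combine
  have hfin : 3*((e:ℝ)+2)^2 * 4^(3*e+4) * (N:ℝ)^(3*e+4)
      ≤ (3*((e:ℝ)+2)^2 * 4^(3*e+4) * (8*((e:ℝ)+2)^2)^(3*e+5) / (N:ℝ)) * R := by
    have h1 : (N:ℝ)^(3*e+5) / (8*((e:ℝ)+2)^2)^(3*e+5) ≤ R := by
      rw [div_le_iff₀ hc2pos]
      linarith [hRlow2]
    have h2 : 3*((e:ℝ)+2)^2 * 4^(3*e+4) * (N:ℝ)^(3*e+4)
        = (3*((e:ℝ)+2)^2 * 4^(3*e+4) * (8*((e:ℝ)+2)^2)^(3*e+5) / (N:ℝ))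
          * ((N:ℝ)^(3*e+5) / (8*((e:ℝ)+2)^2)^(3*e+5)) := by
      rw [show 3*e+5 = (3*e+4)+1 by ring, pow_succ]
      field_simp
      ring
    rw [h2]
    apply mul_le_mul_of_nonneg_left h1 (by positivity)
  exact le_trans hLup hfin
end

section
/- Let d ≥ 2 be an integer. For N ≥ 1 define the normalized weights c_N(λ) := (∏_{j=1}^d p_j(λ)) / (Σ_{μ ∈ Λ_N} (∏_{j=1}^d p_j(μ))²)^{1/2} for λ ∈ Λ_N, and define R_N := 1 − d^{−2} · Σ_{λ' ∈ Λ_{N+1}} (Σ_{i ∈ S(λ')} c_N(λ' − e_i))². Then 0 ≤ R_N for all N, and there exist a constant K and an integer N₀ such that R_N ≤ K/N² for all N ≥ N₀. (R_N is the risk, for fidelity cost, of the covariant estimation strategy of the paper with weights c(λ) proportional to ∏ p_j; thus this strategy achieves the rate 1/N².) -/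
open Finset

/-- The normalized weights `c_N(λ) = ∏_j p_j(λ) / (Σ_{μ∈Λ_N} (∏_j p_j(μ))²)^{1/2}`. -/
noncomputable def cN (d N : ℕ) (lam : Fin d → ℕ) : ℝ :=
  (∏ j, (pgap d lam j : ℝ)) / Real.sqrt (∑ mu ∈ Lam d N, (∏ j, (pgap d mu j : ℝ)) ^ 2)

/-- `R_N = 1 - d⁻² Σ_{λ'∈Λ_{N+1}} (Σ_{i∈S(λ')} c_N(λ'-e_i))²`, the fidelity risk of the
covariant strategy with weights `c(λ) ∝ ∏_j p_j(λ)`. -/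
noncomputable def RN (d N : ℕ) : ℝ :=
  1 - ((d : ℝ) ^ 2)⁻¹ * ∑ lam' ∈ Lam d (N + 1), (∑ i ∈ SS d lam', cN d N (dec d lam' i)) ^ 2

namespace Stmt14

variable {d : ℕ}

/-- integer product of gaps -/
def F (d : ℕ) (mu : Fin d → ℕ) : ℕ := ∏ j, pgap d mu j

def DD (d N : ℕ) : ℕ := ∑ mu ∈ Lam d N, (F d mu) ^ 2

def TT (d N : ℕ) : ℕ :=
  ∑ l ∈ Lam d (N + 1), (∑ i ∈ SS d l, F d (dec d l i)) ^ 2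

def inc (d : ℕ) (lam : Fin d → ℕ) (i : Fin d) : Fin d → ℕ :=
  Function.update lam i (lam i + 1)

lemma mem_Lam {M : ℕ} {mu : Fin d → ℕ} :
    mu ∈ Lam d M ↔ (∀ i : Fin d, nextVal d mu i ≤ mu i) ∧ ∑ j, mu j = M := by
  constructor
  · intro h
    exact (Finset.mem_filter.1 h).2
  · intro h
    refine Finset.mem_filter.2 ⟨?_, h⟩
    refine Fintype.mem_piFinset.2 fun i => ?_
    rw [Finset.mem_range, Nat.lt_succ_iff, ← h.2]
    exact Finset.single_le_sum (f := fun j => mu j) (fun _ _ => Nat.zero_le _)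
      (Finset.mem_univ i)

lemma mem_SS {mu : Fin d → ℕ} {i : Fin d} :
    i ∈ SS d mu ↔ nextVal d mu i < mu i := by
  simp [SS]

lemma nextVal_update_of_ne {mu : Fin d → ℕ} {k i : Fin d} (h : (k : ℕ) ≠ (i : ℕ) + 1)
    (v : ℕ) : nextVal d (Function.update mu k v) i = nextVal d mu i := by
  unfold nextVal
  split
  · rw [Function.update_of_ne]
    intro hk
    exact h (congrArg Fin.val hk).symm
  · rfl

lemma nextVal_update_of_eq {mu : Fin d → ℕ} {k i : Fin d} (h : (k : ℕ) = (i : ℕ) + 1)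
    (v : ℕ) : nextVal d (Function.update mu k v) i = v := by
  unfold nextVal
  have hlt : (i : ℕ) + 1 < d := h ▸ k.isLt
  rw [dif_pos hlt, show (⟨(i : ℕ) + 1, hlt⟩ : Fin d) = k from Fin.ext h.symm,
    Function.update_self]

lemma nextVal_le_of_mem {M : ℕ} {mu : Fin d → ℕ} (h : mu ∈ Lam d M) (i : Fin d) :
    nextVal d mu i ≤ mu i := (mem_Lam.1 h).1 i

lemma sum_of_mem {M : ℕ} {mu : Fin d → ℕ} (h : mu ∈ Lam d M) : ∑ j, mu j = M :=
  (mem_Lam.1 h).2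

lemma pgap_cast {mu : Fin d → ℕ} (h : ∀ i : Fin d, nextVal d mu i ≤ mu i) (j : Fin d) :
    (pgap d mu j : ℤ) = (mu j : ℤ) - nextVal d mu j := by
  have := h j
  unfold pgap
  omega

end Stmt14
namespace Stmt14

variable {d : ℕ}

lemma nextVal_eq_self {l : Fin d → ℕ} {i k : Fin d} (h : (i : ℕ) = (k : ℕ) + 1) :
    nextVal d l k = l i := by
  unfold nextVal
  rw [dif_pos (h ▸ i.isLt), show (⟨(k : ℕ) + 1, h ▸ i.isLt⟩ : Fin d) = i from Fin.ext h.symm]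

lemma dec_mem_Lam {M : ℕ} {l : Fin d → ℕ} {i : Fin d} (h : l ∈ Lam d (M + 1))
    (hi : i ∈ SS d l) : dec d l i ∈ Lam d M := by
  have hmono := (mem_Lam.1 h).1
  have hsum := (mem_Lam.1 h).2
  have hpos : nextVal d l i < l i := mem_SS.1 hi
  refine mem_Lam.2 ⟨fun k => ?_, ?_⟩
  · by_cases hk : k = i
    · subst hk
      rw [show dec d l k k = l k - 1 from Function.update_self .., dec,
        nextVal_update_of_ne (by omega)]
      omega
    · rw [show dec d l i k = l k from Function.update_of_ne hk _ _]
      by_cases hk2 : (i : ℕ) = (k : ℕ) + 1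
      · rw [dec, nextVal_update_of_eq hk2]
        have h1 : nextVal d l k = l i := nextVal_eq_self hk2
        have := hmono k
        omega
      · rw [dec, nextVal_update_of_ne hk2]
        exact hmono k
  · rw [dec, Finset.sum_update_of_mem (Finset.mem_univ i)]
    have h2 : l i + ∑ k ∈ Finset.univ.erase i, l k = ∑ k, l k :=
      Finset.add_sum_erase _ l (Finset.mem_univ i)
    rw [Finset.erase_eq] at h2
    omega

lemma inc_mem_Lam {M : ℕ} {mu : Fin d → ℕ} {j : Fin d} (h : mu ∈ Lam d M)
    (hadd : (j : ℕ) = 0 ∨ mu j < mu (prev d j)) : inc d mu j ∈ Lam d (M + 1) := by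
  have hmono := (mem_Lam.1 h).1
  have hsum := (mem_Lam.1 h).2
  refine mem_Lam.2 ⟨fun k => ?_, ?_⟩
  · by_cases hk : k = j
    · subst hk
      rw [show inc d mu k k = mu k + 1 from Function.update_self .., inc,
        nextVal_update_of_ne (by omega)]
      have := hmono k
      omega
    · rw [show inc d mu j k = mu k from Function.update_of_ne hk _ _]
      by_cases hk2 : (j : ℕ) = (k : ℕ) + 1
      · rw [inc, nextVal_update_of_eq hk2]
        rcases hadd with h0 | hlt
        · omega
        · have hpj : prev d j = k := Fin.ext (by simp [prev]; omega)
          rw [hpj] at hlt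
          omega
      · rw [inc, nextVal_update_of_ne hk2]
        exact hmono k
  · rw [inc, Finset.sum_update_of_mem (Finset.mem_univ j)]
    have h2 : mu j + ∑ k ∈ Finset.univ.erase j, mu k = ∑ k, mu k :=
      Finset.add_sum_erase _ mu (Finset.mem_univ j)
    rw [Finset.erase_eq] at h2
    omega

lemma SS_inc_self {mu : Fin d → ℕ} {j : Fin d} (hmono : ∀ k, nextVal d mu k ≤ mu k) :
    j ∈ SS d (inc d mu j) := by
  rw [mem_SS, inc, nextVal_update_of_ne (by omega), Function.update_self]
  have := hmono j
  omega

lemma dec_inc_cancel (mu : Fin d → ℕ) (j : Fin d) : dec d (inc d mu j) j = mu := by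
  funext k
  by_cases hk : k = j
  · subst hk
    simp [dec, inc]
  · simp [dec, inc, Function.update_of_ne hk]

lemma inc_dec_cancel {l : Fin d → ℕ} {i : Fin d} (h : 1 ≤ l i) :
    inc d (dec d l i) i = l := by
  funext k
  by_cases hk : k = i
  · subst hk
    simp [dec, inc]
    omega
  · simp [dec, inc, Function.update_of_ne hk]

lemma addable_dec {l : Fin d → ℕ} {i : Fin d} (hmono : ∀ k, nextVal d l k ≤ l k)
    (hi : nextVal d l i < l i) : (i : ℕ) = 0 ∨ dec d l i i < dec d l i (prev d i) := by
  by_cases h0 : (i : ℕ) = 0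
  · exact Or.inl h0
  · refine Or.inr ?_
    have hne : prev d i ≠ i := by
      simp [Fin.ext_iff, prev]
      omega
    rw [show dec d l i i = l i - 1 from Function.update_self ..,
      show dec d l i (prev d i) = l (prev d i) from Function.update_of_ne hne _ _]
    have h1 : nextVal d l (prev d i) = l i := nextVal_eq_self (by simp [prev]; omega)
    have := hmono (prev d i)
    omega

end Stmt14
namespace Stmt14

variable {d : ℕ}

def AA (d N : ℕ) (i j : Fin d) : Finset (Fin d → ℕ) :=
  (Lam d (N + 1)).filter (fun l => i ∈ SS d l ∧ j ∈ SS d l)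

def UU (d N : ℕ) (i j : Fin d) : ℕ :=
  ∑ l ∈ AA d N i j, F d (dec d l i) * F d (dec d l j)

def BB (d N : ℕ) (i j : Fin d) : Finset (Fin d → ℕ) :=
  (Lam d N).filter
    (fun mu => ((j : ℕ) = 0 ∨ mu j < mu (prev d j)) ∧
      nextVal d (inc d mu j) i < inc d mu j i)

def mov (d : ℕ) (i j : Fin d) (mu : Fin d → ℕ) : Fin d → ℕ := dec d (inc d mu j) i

lemma I1 (N : ℕ) : TT d N = ∑ i, ∑ j, UU d N i j := by
  unfold TT UU AA
  have key : ∀ l ∈ Lam d (N + 1),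
      (∑ i ∈ SS d l, F d (dec d l i)) ^ 2 =
      ∑ i, ∑ j, (if i ∈ SS d l ∧ j ∈ SS d l then F d (dec d l i) * F d (dec d l j) else 0) := by
    intro l _
    conv_lhs => rw [sq, Finset.sum_mul_sum,
      show SS d l = Finset.univ.filter (fun i => i ∈ SS d l) from by simp,
      Finset.sum_filter]
    refine Finset.sum_congr rfl fun i _ => ?_
    split_ifs with h
    · rw [Finset.sum_filter]
      refine Finset.sum_congr rfl fun j _ => ?_
      split_ifs with h1 h2 h3
      · rfl
      · exact absurd ⟨h, h1⟩ h2
      · exact absurd h3.2 h1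
      · rfl
    · rw [Finset.sum_eq_zero]
      intro j _
      rw [if_neg (fun hc => h hc.1)]
  rw [Finset.sum_congr rfl key, Finset.sum_comm]
  refine Finset.sum_congr rfl fun i _ => ?_
  rw [Finset.sum_comm]
  refine Finset.sum_congr rfl fun j _ => ?_
  rw [Finset.sum_filter]

end Stmt14
namespace Stmt14

variable {d : ℕ}

lemma F_pos {mu : Fin d → ℕ} (h : F d mu ≠ 0) (k : Fin d) : 1 ≤ pgap d mu k := by
  rcases Nat.eq_zero_or_pos (pgap d mu k) with h0 | h1
  · exact absurd (Finset.prod_eq_zero (Finset.mem_univ k) h0) h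
  · exact h1

lemma dec_j_mem {N : ℕ} {l : Fin d → ℕ} {i j : Fin d} (hl : l ∈ Lam d (N + 1))
    (hi : i ∈ SS d l) (hj : j ∈ SS d l) : dec d l j ∈ BB d N i j := by
  have hm := (mem_Lam.1 hl).1
  have hjlt := mem_SS.1 hj
  have hcancel : inc d (dec d l j) j = l := inc_dec_cancel (by omega)
  refine Finset.mem_filter.2 ⟨dec_mem_Lam hl hj, addable_dec hm hjlt, ?_⟩
  rw [hcancel]
  exact mem_SS.1 hi

lemma BB_spec {N : ℕ} {mu : Fin d → ℕ} {i j : Fin d} (hmu : mu ∈ BB d N i j) :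
    inc d mu j ∈ Lam d (N + 1) ∧ i ∈ SS d (inc d mu j) ∧ j ∈ SS d (inc d mu j) := by
  obtain ⟨h1, h2, h3⟩ := Finset.mem_filter.1 hmu
  exact ⟨inc_mem_Lam h1 h2, mem_SS.2 h3, SS_inc_self (mem_Lam.1 h1).1⟩

lemma mov_mem {N : ℕ} {mu : Fin d → ℕ} {i j : Fin d} (hmu : mu ∈ BB d N i j) :
    mov d i j mu ∈ BB d N j i := by
  obtain ⟨hl, hiS, hjS⟩ := BB_spec hmu
  have hm := (mem_Lam.1 hl).1
  have hilt := mem_SS.1 hiS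
  refine Finset.mem_filter.2 ⟨dec_mem_Lam hl hiS, addable_dec hm hilt, ?_⟩
  simp only [mov]
  rw [show inc d (dec d (inc d mu j) i) i = inc d mu j from inc_dec_cancel (by omega)]
  exact mem_SS.1 hjS

lemma mov_mov {N : ℕ} {mu : Fin d → ℕ} {i j : Fin d} (hmu : mu ∈ BB d N i j) :
    mov d j i (mov d i j mu) = mu := by
  obtain ⟨hl, hiS, hjS⟩ := BB_spec hmu
  have hilt := mem_SS.1 hiS
  rw [mov, mov, inc_dec_cancel (by omega), dec_inc_cancel]

lemma I2 (N : ℕ) (i : Fin d) : UU d N i i = DD d N := by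
  unfold UU DD
  have h1 : ∑ l ∈ AA d N i i, F d (dec d l i) * F d (dec d l i) =
      ∑ mu ∈ BB d N i i, F d mu * F d mu := by
    refine Finset.sum_nbij' (fun l => dec d l i) (fun mu => inc d mu i) ?_ ?_ ?_ ?_ ?_
    · intro l hl
      obtain ⟨hlm, hi1, hi2⟩ := Finset.mem_filter.1 hl
      exact dec_j_mem hlm hi1 hi2
    · intro mu hmu
      obtain ⟨h1, h2, h3⟩ := BB_spec hmu
      exact Finset.mem_filter.2 ⟨h1, h2, h3⟩
    · intro l hl
      obtain ⟨hlm, hi1, _⟩ := Finset.mem_filter.1 hl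
      exact inc_dec_cancel (by have := mem_SS.1 hi1; omega)
    · intro mu _
      exact dec_inc_cancel mu i
    · intro l _
      rfl
  rw [h1, show BB d N i i = (Lam d N).filter _ from rfl, Finset.sum_filter_of_ne]
  · exact Finset.sum_congr rfl fun mu _ => (sq (F d mu)).symm ▸ (pow_two (F d mu)).symm
  · intro mu hmu hne
    have hF : F d mu ≠ 0 := fun h => hne (by rw [h]; ring)
    have hm := (mem_Lam.1 hmu).1
    constructor
    · by_cases h0 : (i : ℕ) = 0
      · exact Or.inl h0
      · refine Or.inr ?_
        have hgap := F_pos hF (prev d i)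
        have hnv : nextVal d mu (prev d i) = mu i := nextVal_eq_self (by simp [prev]; omega)
        unfold pgap at hgap
        omega
    · rw [inc, nextVal_update_of_ne (by omega), Function.update_self]
      have := hm i
      omega

lemma I3a (N : ℕ) {i j : Fin d} : UU d N i j = ∑ mu ∈ BB d N i j, F d mu * F d (mov d i j mu) := by
  unfold UU
  refine Finset.sum_nbij' (fun l => dec d l j) (fun mu => inc d mu j) ?_ ?_ ?_ ?_ ?_
  · intro l hl
    obtain ⟨hlm, hi1, hi2⟩ := Finset.mem_filter.1 hl
    exact dec_j_mem hlm hi1 hi2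
  · intro mu hmu
    obtain ⟨h1, h2, h3⟩ := BB_spec hmu
    exact Finset.mem_filter.2 ⟨h1, h2, h3⟩
  · intro l hl
    obtain ⟨hlm, _, hj1⟩ := Finset.mem_filter.1 hl
    exact inc_dec_cancel (by have := mem_SS.1 hj1; omega)
  · intro mu _
    exact dec_inc_cancel mu j
  · intro l hl
    obtain ⟨hlm, _, hj1⟩ := Finset.mem_filter.1 hl
    rw [mov, inc_dec_cancel (by have := mem_SS.1 hj1; omega)]
    exact mul_comm _ _

lemma I3b (N : ℕ) {i j : Fin d} :
    ∑ mu ∈ BB d N i j, F d (mov d i j mu) ^ 2 = ∑ nu ∈ BB d N j i, F d nu ^ 2 := by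
  refine Finset.sum_nbij' (mov d i j) (mov d j i) ?_ ?_ ?_ ?_ ?_
  · exact fun mu hmu => mov_mem hmu
  · exact fun nu hnu => mov_mem hnu
  · exact fun mu hmu => mov_mov hmu
  · exact fun nu hnu => mov_mov hnu
  · exact fun mu _ => rfl

end Stmt14
namespace Stmt14

variable {d : ℕ}

noncomputable def EE (d N : ℕ) (i j : Fin d) : ℤ :=
  ∑ mu ∈ BB d N i j, ((F d mu : ℤ) - F d (mov d i j mu)) ^ 2

def LL (d N : ℕ) (i j : Fin d) : ℕ :=
  ∑ mu ∈ (Lam d N).filter (fun mu => ¬(((j : ℕ) = 0 ∨ mu j < mu (prev d j)) ∧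
      nextVal d (inc d mu j) i < inc d mu j i)), F d mu ^ 2

lemma DD_split (N : ℕ) (i j : Fin d) :
    (∑ mu ∈ BB d N i j, F d mu ^ 2) + LL d N i j = DD d N := by
  unfold BB LL DD
  exact Finset.sum_filter_add_sum_filter_not _ _ _

lemma key_offdiag (N : ℕ) {i j : Fin d} :
    2 * ((DD d N : ℤ) - UU d N i j) = EE d N i j + LL d N i j + LL d N j i := by
  have e1 : EE d N i j = (∑ mu ∈ BB d N i j, (F d mu : ℤ) ^ 2) +
      (∑ mu ∈ BB d N i j, (F d (mov d i j mu) : ℤ) ^ 2) -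
      2 * ∑ mu ∈ BB d N i j, (F d mu : ℤ) * (F d (mov d i j mu) : ℤ) := by
    unfold EE
    rw [Finset.sum_congr rfl (fun mu _ => (by ring :
      ((F d mu : ℤ) - F d (mov d i j mu)) ^ 2 =
      (F d mu : ℤ) ^ 2 + (F d (mov d i j mu) : ℤ) ^ 2 -
      2 * ((F d mu : ℤ) * (F d (mov d i j mu) : ℤ)))),
      Finset.sum_sub_distrib, Finset.sum_add_distrib, ← Finset.mul_sum]
  have h3b' : (∑ mu ∈ BB d N i j, (F d (mov d i j mu) : ℤ) ^ 2) =
      ∑ nu ∈ BB d N j i, (F d nu : ℤ) ^ 2 := by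
    exact_mod_cast congrArg (fun n : ℕ => (n : ℤ)) (I3b (d := d) N (i := i) (j := j))
  have e3 : (UU d N i j : ℤ) = ∑ mu ∈ BB d N i j, (F d mu : ℤ) * (F d (mov d i j mu) : ℤ) := by
    rw [I3a]; push_cast; rfl
  have hd1 : (DD d N : ℤ) = ∑ mu ∈ BB d N i j, (F d mu : ℤ) ^ 2 + LL d N i j := by
    rw [← DD_split N i j]; push_cast; rfl
  have hd2 : (DD d N : ℤ) = ∑ mu ∈ BB d N j i, (F d mu : ℤ) ^ 2 + LL d N j i := by
    rw [← DD_split N j i]; push_cast; rfl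
  rw [e1, h3b', e3]
  linear_combination hd1 + hd2

noncomputable def W (d N : ℕ) (i j : Fin d) : ℤ :=
  if i = j then 0 else EE d N i j + LL d N i j + LL d N j i

lemma W_nonneg (N : ℕ) (i j : Fin d) : 0 ≤ W d N i j := by
  unfold W
  split_ifs
  · exact le_refl 0
  · have hE : 0 ≤ EE d N i j := Finset.sum_nonneg fun mu _ => sq_nonneg _
    exact add_nonneg (add_nonneg hE (Int.natCast_nonneg _)) (Int.natCast_nonneg _)

lemma main_identity (N : ℕ) :
    2 * ((d : ℤ) ^ 2 * DD d N - TT d N) = ∑ i, ∑ j, W d N i j := by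
  have h1 : (TT d N : ℤ) = ∑ i, ∑ j, (UU d N i j : ℤ) := by
    rw [I1]; push_cast; rfl
  have h2 : (d : ℤ) ^ 2 * DD d N = ∑ _i : Fin d, ∑ _j : Fin d, (DD d N : ℤ) := by
    simp [Finset.sum_const, Finset.card_univ]
    ring
  rw [h1, h2, ← Finset.sum_sub_distrib, Finset.mul_sum]
  refine Finset.sum_congr rfl fun i _ => ?_
  rw [← Finset.sum_sub_distrib, Finset.mul_sum]
  refine Finset.sum_congr rfl fun j _ => ?_
  unfold W
  split_ifs with hij
  · subst hij
    rw [I2]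
    ring
  · exact key_offdiag N

lemma TT_le (N : ℕ) : (TT d N : ℤ) ≤ (d : ℤ) ^ 2 * DD d N := by
  nlinarith [main_identity (d := d) N, Finset.sum_nonneg (fun i (_ : i ∈ Finset.univ) =>
    Finset.sum_nonneg (fun j (_ : j ∈ Finset.univ) => W_nonneg (d := d) N i j))]

end Stmt14
namespace Stmt14

variable {d : ℕ}

lemma prod_bounds {ι : Type*} (s : Finset ι) (b : ι → ℤ) (M : ℤ)
    (hb : ∀ k ∈ s, 0 ≤ b k ∧ b k ≤ M) :
    0 ≤ ∏ k ∈ s, b k ∧ ∏ k ∈ s, b k ≤ M ^ s.card := by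
  constructor
  · exact Finset.prod_nonneg fun k hk => (hb k hk).1
  · calc ∏ k ∈ s, b k ≤ ∏ _k ∈ s, M :=
          Finset.prod_le_prod (fun k hk => (hb k hk).1) (fun k hk => (hb k hk).2)
      _ = M ^ s.card := Finset.prod_const M

lemma abs_prod_sub_prod_le {ι : Type*} (s : Finset ι) (a b : ι → ℤ) (M : ℤ)
    (ha : ∀ k ∈ s, 0 ≤ a k ∧ a k ≤ M) (hb : ∀ k ∈ s, 0 ≤ b k ∧ b k ≤ M)
    (hab : ∀ k ∈ s, |a k - b k| ≤ 2) :
    |∏ k ∈ s, a k - ∏ k ∈ s, b k| ≤ 2 * s.card * M ^ (s.card - 1) := by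
  induction s using Finset.cons_induction with
  | empty => simp
  | cons k s hk ih =>
    have hmem : k ∈ Finset.cons k s hk := Finset.mem_cons_self k s
    have hM : 0 ≤ M := le_trans (ha k hmem).1 (ha k hmem).2
    have ha' : ∀ m ∈ s, 0 ≤ a m ∧ a m ≤ M := fun m hm => ha m (Finset.mem_cons_of_mem hm)
    have hb' : ∀ m ∈ s, 0 ≤ b m ∧ b m ≤ M := fun m hm => hb m (Finset.mem_cons_of_mem hm)
    have hab' : ∀ m ∈ s, |a m - b m| ≤ 2 := fun m hm => hab m (Finset.mem_cons_of_mem hm)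
    have IH := ih ha' hb' hab'
    have hpb := prod_bounds s b M hb'
    have hpa := prod_bounds s a M ha'
    rw [Finset.prod_cons, Finset.prod_cons, Finset.card_cons]
    have step1 : a k * ∏ m ∈ s, a m - b k * ∏ m ∈ s, b m =
        a k * (∏ m ∈ s, a m - ∏ m ∈ s, b m) + (a k - b k) * ∏ m ∈ s, b m := by ring
    rw [step1]
    have h1 : |a k * (∏ m ∈ s, a m - ∏ m ∈ s, b m)| ≤ M * (2 * s.card * M ^ (s.card - 1)) := by
      rw [abs_mul]
      refine mul_le_mul ?_ IH (abs_nonneg _) hM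
      rw [abs_of_nonneg (ha k hmem).1]
      exact (ha k hmem).2
    have h2 : |(a k - b k) * ∏ m ∈ s, b m| ≤ 2 * M ^ s.card := by
      rw [abs_mul]
      refine mul_le_mul (hab k hmem) ?_ (abs_nonneg _) (by norm_num)
      rw [abs_of_nonneg hpb.1]
      exact hpb.2
    have h3 : M * (2 * s.card * M ^ (s.card - 1)) ≤ 2 * s.card * M ^ s.card := by
      rcases Nat.eq_zero_or_pos s.card with h0 | h1
      · simp [h0]
      · have : M * M ^ (s.card - 1) = M ^ s.card := by
          rw [← pow_succ']
          congr 1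
          omega
        exact le_of_eq (by rw [← this]; ring)
    calc |a k * (∏ m ∈ s, a m - ∏ m ∈ s, b m) + (a k - b k) * ∏ m ∈ s, b m|
        ≤ |a k * (∏ m ∈ s, a m - ∏ m ∈ s, b m)| + |(a k - b k) * ∏ m ∈ s, b m| := abs_add_le _ _
      _ ≤ 2 * s.card * M ^ s.card + 2 * M ^ s.card := by
          refine add_le_add (le_trans h1 h3) h2
      _ ≤ 2 * (s.card + 1) * M ^ s.card := by
          have : (0:ℤ) ≤ M ^ s.card := pow_nonneg hM _
          push_cast
          nlinarith
  
lemma pgap_le {N : ℕ} {mu : Fin d → ℕ} (h : mu ∈ Lam d N) (j : Fin d) :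
    pgap d mu j ≤ N := by
  have h1 : mu j ≤ N := by
    rw [← sum_of_mem h]
    exact Finset.single_le_sum (f := fun k => mu k) (fun _ _ => Nat.zero_le _) (Finset.mem_univ j)
  unfold pgap
  omega

lemma F_le_of_small {N : ℕ} {mu : Fin d → ℕ} (h : mu ∈ Lam d N) (i : Fin d)
    (hsmall : pgap d mu i ≤ 1) : F d mu ≤ N ^ (d - 1) := by
  unfold F
  rw [← Finset.mul_prod_erase Finset.univ _ (Finset.mem_univ i)]
  have h1 : ∏ k ∈ Finset.univ.erase i, pgap d mu k ≤ N ^ (d - 1) := by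
    have := Finset.prod_le_pow_card (Finset.univ.erase i) (pgap d mu) N
      (fun k _ => pgap_le h k)
    rwa [Finset.card_erase_of_mem (Finset.mem_univ i), Finset.card_univ, Fintype.card_fin] at this
  calc pgap d mu i * ∏ k ∈ Finset.univ.erase i, pgap d mu k
      ≤ 1 * (N ^ (d - 1)) := Nat.mul_le_mul hsmall h1
    _ = N ^ (d - 1) := one_mul _

lemma LL_pointwise {N : ℕ} {mu : Fin d → ℕ} {i j : Fin d} (hij : i ≠ j)
    (hmu : mu ∈ Lam d N)
    (h : ¬(((j : ℕ) = 0 ∨ mu j < mu (prev d j)) ∧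
      nextVal d (inc d mu j) i < inc d mu j i)) : F d mu ≤ N ^ (d - 1) := by
  rw [not_and_or] at h
  rcases h with h | h
  · push_neg at h
    obtain ⟨hj0, hle⟩ := h
    refine F_le_of_small hmu (prev d j) ?_
    have hnv : nextVal d mu (prev d j) = mu j := nextVal_eq_self (by simp [prev]; omega)
    unfold pgap
    omega
  · push_neg at h
    rw [show inc d mu j i = mu i from Function.update_of_ne hij _ _] at h
    by_cases hk2 : (j : ℕ) = (i : ℕ) + 1
    · rw [inc, nextVal_update_of_eq hk2] at h
      have hnv : nextVal d mu i = mu j := nextVal_eq_self hk2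
      refine F_le_of_small hmu i ?_
      unfold pgap
      omega
    · rw [inc, nextVal_update_of_ne hk2] at h
      refine F_le_of_small hmu i ?_
      unfold pgap
      omega

lemma mov_entry {N : ℕ} {mu : Fin d → ℕ} {i j : Fin d} (hij : i ≠ j)
    (hmu : mu ∈ BB d N i j) (k : Fin d) :
    ((mu k : ℤ)) - 1 ≤ ((mov d i j mu) k : ℤ) ∧ ((mov d i j mu) k : ℤ) ≤ (mu k : ℤ) + 1 := by
  have hipos : 1 ≤ mu i := by
    have h2 := (Finset.mem_filter.1 hmu).2.2
    rw [show inc d mu j i = mu i from Function.update_of_ne hij _ _] at h2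
    omega
  by_cases hk : k = i
  · have he : mov d i j mu k = mu i - 1 := by
      rw [hk]
      simp [mov, dec, inc, Function.update_of_ne hij]
    rw [he, hk]
    omega
  · have he0 : mov d i j mu k = inc d mu j k := Function.update_of_ne hk _ _
    by_cases hk2 : k = j
    · have he : mov d i j mu k = mu j + 1 := by
        rw [he0, hk2]
        simp [inc]
      rw [he, hk2]
      omega
    · have he : mov d i j mu k = mu k := by
        rw [he0]
        exact Function.update_of_ne hk2 _ _
      rw [he]
      omega

lemma EE_pointwise {N : ℕ} {mu : Fin d → ℕ} {i j : Fin d} (hij : i ≠ j)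
    (hmu : mu ∈ BB d N i j) :
    ((F d mu : ℤ) - F d (mov d i j mu)) ^ 2 ≤ (2 * d * (N : ℤ) ^ (d - 1)) ^ 2 := by
  have hmuL : mu ∈ Lam d N := Finset.mem_filter.1 hmu |>.1
  have hmovL : mov d i j mu ∈ Lam d N := Finset.mem_filter.1 (mov_mem hmu) |>.1
  have hmono1 := (mem_Lam.1 hmuL).1
  have hmono2 := (mem_Lam.1 hmovL).1
  have hnv : ∀ k : Fin d, ((nextVal d mu k : ℤ)) - 1 ≤ (nextVal d (mov d i j mu) k : ℤ) ∧
      ((nextVal d (mov d i j mu) k : ℤ)) ≤ (nextVal d mu k : ℤ) + 1 := by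
    intro k
    by_cases hlt : (k : ℕ) + 1 < d
    · rw [show nextVal d mu k = mu ⟨(k : ℕ) + 1, hlt⟩ from dif_pos hlt,
        show nextVal d (mov d i j mu) k = (mov d i j mu) ⟨(k : ℕ) + 1, hlt⟩ from dif_pos hlt]
      have := mov_entry hij hmu (⟨(k : ℕ) + 1, hlt⟩ : Fin d)
      exact ⟨by omega, by omega⟩
    · rw [show nextVal d mu k = 0 from dif_neg hlt,
        show nextVal d (mov d i j mu) k = 0 from dif_neg hlt]
      omega
  have habs : |(F d mu : ℤ) - F d (mov d i j mu)| ≤ 2 * d * (N : ℤ) ^ (d - 1) := by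
    have hFa : (F d mu : ℤ) = ∏ k, (pgap d mu k : ℤ) := by push_cast [F]; rfl
    have hFb : (F d (mov d i j mu) : ℤ) = ∏ k, (pgap d (mov d i j mu) k : ℤ) := by
      push_cast [F]; rfl
    rw [hFa, hFb]
    have := abs_prod_sub_prod_le Finset.univ (fun k => (pgap d mu k : ℤ))
      (fun k => (pgap d (mov d i j mu) k : ℤ)) (N : ℤ)
      (fun k _ => ⟨Int.natCast_nonneg _, by
        show ((pgap d mu k : ℤ)) ≤ (N : ℤ)
        exact_mod_cast pgap_le hmuL k⟩)
      (fun k _ => ⟨Int.natCast_nonneg _, by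
        show ((pgap d (mov d i j mu) k : ℤ)) ≤ (N : ℤ)
        exact_mod_cast pgap_le hmovL k⟩)
      (fun k _ => by
        show |((pgap d mu k : ℤ)) - ((pgap d (mov d i j mu) k : ℤ))| ≤ 2
        have e1 := pgap_cast hmono1 k
        have e2 := pgap_cast hmono2 k
        have e3 := mov_entry hij hmu k
        have e4 := hnv k
        rw [abs_le]
        constructor <;> omega)
    rwa [Finset.card_univ, Fintype.card_fin] at this
  calc ((F d mu : ℤ) - F d (mov d i j mu)) ^ 2 = |(F d mu : ℤ) - F d (mov d i j mu)| ^ 2 := by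
        rw [sq_abs]
    _ ≤ (2 * d * (N : ℤ) ^ (d - 1)) ^ 2 := by
        refine pow_le_pow_left₀ (abs_nonneg _) habs 2

end Stmt14
namespace Stmt14

variable {d : ℕ}

lemma card_Lam_le {M : ℕ} (hd : 1 ≤ d) : (Lam d M).card ≤ (M + 1) ^ (d - 1) := by
  classical
  have hcard : (Fintype.piFinset (fun _ : Fin (d - 1) => Finset.range (M + 1))).card =
      (M + 1) ^ (d - 1) := by
    rw [Fintype.card_piFinset]
    simp
  rw [← hcard]
  refine Finset.card_le_card_of_injOn
    (fun mu (k : Fin (d - 1)) => mu ⟨(k : ℕ), by omega⟩) ?_ ?_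
  · intro mu hmu
    refine Fintype.mem_piFinset.2 fun k => ?_
    rw [Finset.mem_range, Nat.lt_succ_iff, ← sum_of_mem hmu]
    exact Finset.single_le_sum (f := fun j => mu j) (fun _ _ => Nat.zero_le _) (Finset.mem_univ _)
  · intro mu hmu nu hnu heq
    have heq' : ∀ k : Fin d, (k : ℕ) < d - 1 → mu k = nu k := by
      intro k hk
      have := congrFun heq ⟨(k : ℕ), hk⟩
      simpa using this
    funext i
    by_cases hi : (i : ℕ) < d - 1
    · exact heq' i hi
    · have hsum1 := sum_of_mem hmu
      have hsum2 := sum_of_mem hnu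
      rw [← Finset.add_sum_erase _ mu (Finset.mem_univ i)] at hsum1
      rw [← Finset.add_sum_erase _ nu (Finset.mem_univ i)] at hsum2
      have herase : ∑ k ∈ Finset.univ.erase i, mu k = ∑ k ∈ Finset.univ.erase i, nu k := by
        refine Finset.sum_congr rfl fun k hk => ?_
        have hki : k ≠ i := (Finset.mem_erase.1 hk).1
        refine heq' k ?_
        have : (k : ℕ) ≠ (i : ℕ) := fun h => hki (Fin.ext h)
        have hkd := k.isLt
        have hid := i.isLt
        omega
      omega

lemma EE_le (N : ℕ) {i j : Fin d} :
    EE d N i j ≤ ((BB d N i j).card : ℤ) * (2 * d * (N : ℤ) ^ (d - 1)) ^ 2 := by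
  have h := Finset.sum_le_card_nsmul (BB d N i j)
    (fun mu => ((F d mu : ℤ) - F d (mov d i j mu)) ^ 2) ((2 * d * (N : ℤ) ^ (d - 1)) ^ 2)
    (fun mu hmu => by
      show ((F d mu : ℤ) - F d (mov d i j mu)) ^ 2 ≤ _
      by_cases hij : i = j
      · subst hij
        have : mov d i i mu = mu := by
          funext k
          by_cases hk : k = i
          · rw [hk]
            simp [mov, dec, inc]
          · simp [mov, dec, inc, Function.update_of_ne hk]
        rw [this, sub_self]
        positivity
      · exact EE_pointwise hij hmu)
  rwa [nsmul_eq_mul] at h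

lemma LL_le (N : ℕ) {i j : Fin d} (hij : i ≠ j) (hd : 1 ≤ d) :
    LL d N i j ≤ (N + 1) ^ (d - 1) * (N ^ (d - 1)) ^ 2 := by
  unfold LL
  calc ∑ mu ∈ (Lam d N).filter _, F d mu ^ 2
      ≤ ((Lam d N).filter _).card • (N ^ (d - 1)) ^ 2 := by
        refine Finset.sum_le_card_nsmul _ _ _ fun mu hmu => ?_
        obtain ⟨hmuL, hcond⟩ := Finset.mem_filter.1 hmu
        exact Nat.pow_le_pow_left (LL_pointwise hij hmuL hcond) 2
    _ ≤ (N + 1) ^ (d - 1) * (N ^ (d - 1)) ^ 2 := by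
        rw [smul_eq_mul]
        refine Nat.mul_le_mul_right _ ?_
        exact le_trans (Finset.card_le_card (Finset.filter_subset _ _)) (card_Lam_le hd)

lemma W_le (N : ℕ) (hd : 1 ≤ d) (i j : Fin d) :
    W d N i j ≤ (((N + 1) ^ (d - 1) : ℕ) : ℤ) *
      ((2 * d * (N : ℤ) ^ (d - 1)) ^ 2 + 2 * ((N : ℤ) ^ (d - 1)) ^ 2) := by
  have hrhs : (0:ℤ) ≤ (((N + 1) ^ (d - 1) : ℕ) : ℤ) *
      ((2 * d * (N : ℤ) ^ (d - 1)) ^ 2 + 2 * ((N : ℤ) ^ (d - 1)) ^ 2) := by positivity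
  unfold W
  split_ifs with hij
  · exact hrhs
  · have h1 := EE_le (d := d) N (i := i) (j := j)
    have hcard : ((BB d N i j).card : ℤ) ≤ (((N + 1) ^ (d - 1) : ℕ) : ℤ) := by
      exact_mod_cast le_trans (Finset.card_le_card (Finset.filter_subset _ _)) (card_Lam_le hd)
    have h2 : (LL d N i j : ℤ) ≤ (((N + 1) ^ (d - 1) : ℕ) : ℤ) * ((N : ℤ) ^ (d - 1)) ^ 2 := by
      have := LL_le (d := d) N hij hd
      calc (LL d N i j : ℤ) ≤ (((N + 1) ^ (d - 1) * (N ^ (d - 1)) ^ 2 : ℕ) : ℤ) := by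
            exact_mod_cast this
        _ = (((N + 1) ^ (d - 1) : ℕ) : ℤ) * ((N : ℤ) ^ (d - 1)) ^ 2 := by push_cast; ring
    have h3 : (LL d N j i : ℤ) ≤ (((N + 1) ^ (d - 1) : ℕ) : ℤ) * ((N : ℤ) ^ (d - 1)) ^ 2 := by
      have := LL_le (d := d) N (Ne.symm hij) hd
      calc (LL d N j i : ℤ) ≤ (((N + 1) ^ (d - 1) * (N ^ (d - 1)) ^ 2 : ℕ) : ℤ) := by
            exact_mod_cast this
        _ = (((N + 1) ^ (d - 1) : ℕ) : ℤ) * ((N : ℤ) ^ (d - 1)) ^ 2 := by push_cast; ring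
    have h4 : EE d N i j ≤ (((N + 1) ^ (d - 1) : ℕ) : ℤ) * (2 * d * (N : ℤ) ^ (d - 1)) ^ 2 := by
      refine le_trans h1 ?_
      refine mul_le_mul_of_nonneg_right hcard (by positivity)
    nlinarith [h4, h2, h3]

end Stmt14
namespace Stmt14

variable {d : ℕ}

def build (d : ℕ) (xx : Fin d → ℕ) : Fin d → ℕ :=
  fun j => ∑ k ∈ Finset.univ.filter (fun k => j ≤ k), xx k

lemma buildNext (xx : Fin d → ℕ) (j : Fin d) :
    nextVal d (build d xx) j = ∑ k ∈ Finset.univ.filter (fun k => j < k), xx k := by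
  unfold nextVal
  by_cases h : (j : ℕ) + 1 < d
  · rw [dif_pos h]
    unfold build
    refine Finset.sum_congr ?_ fun _ _ => rfl
    ext k
    simp only [Finset.mem_filter, Finset.mem_univ, true_and, Fin.le_def, Fin.lt_def]
    omega
  · rw [dif_neg h]
    symm
    rw [Finset.filter_false_of_mem, Finset.sum_empty]
    intro k _
    rw [Fin.lt_def]
    have := k.isLt
    omega

lemma buildPgap (xx : Fin d → ℕ) (j : Fin d) : pgap d (build d xx) j = xx j := by
  unfold pgap
  rw [buildNext]
  have hsplit : Finset.univ.filter (fun k => j ≤ k) =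
      insert j (Finset.univ.filter (fun k => j < k)) := by
    ext k
    simp only [Finset.mem_filter, Finset.mem_univ, true_and, Finset.mem_insert]
    rw [Fin.le_def, Fin.lt_def, Fin.ext_iff]
    omega
  rw [show build d xx j = ∑ k ∈ Finset.univ.filter (fun k => j ≤ k), xx k from rfl, hsplit,
    Finset.sum_insert (fun hmem => lt_irrefl j (Finset.mem_filter.1 hmem).2)]
  show xx j + ∑ k ∈ Finset.univ.filter (fun k => j < k), xx k -
      ∑ k ∈ Finset.univ.filter (fun k => j < k), xx k = xx j
  omega

lemma buildMono (xx : Fin d → ℕ) (j : Fin d) : nextVal d (build d xx) j ≤ build d xx j := by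
  rw [buildNext]
  refine Finset.sum_le_sum_of_subset fun k hk => ?_
  simp only [Finset.mem_filter, Finset.mem_univ, true_and] at *
  exact le_of_lt hk

lemma buildSum (xx : Fin d → ℕ) : ∑ j, build d xx j = ∑ k : Fin d, ((k : ℕ) + 1) * xx k := by
  unfold build
  calc ∑ j : Fin d, ∑ k ∈ Finset.univ.filter (fun k : Fin d => j ≤ k), xx k
      = ∑ j : Fin d, ∑ k : Fin d, if j ≤ k then xx k else 0 := by
        refine Finset.sum_congr rfl fun j _ => ?_
        rw [Finset.sum_filter]
    _ = ∑ k : Fin d, ∑ j : Fin d, if j ≤ k then xx k else 0 := Finset.sum_comm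
    _ = ∑ k : Fin d, ((k : ℕ) + 1) * xx k := by
        refine Finset.sum_congr rfl fun k _ => ?_
        rw [← Finset.sum_filter]
        rw [show Finset.univ.filter (fun j => j ≤ k) = Finset.Iic k from by ext; simp]
        rw [Finset.sum_const, Fin.card_Iic, smul_eq_mul]

lemma DD_lower (hd2 : 2 ≤ d) {N a : ℕ} (ha : a = N / (4 * d ^ 2)) (hN : 8 * d ^ 2 ≤ N) :
    a ^ (3 * d - 1) ≤ DD d N := by
  haveI : NeZero d := ⟨by omega⟩
  classical
  set box : Finset (Fin d → ℕ) :=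
    Fintype.piFinset (fun k : Fin d => if k = 0 then ({0} : Finset ℕ) else Finset.Ico a (2 * a))
    with hbox_def
  set cc : (Fin d → ℕ) → ℕ :=
    fun t => ∑ m ∈ Finset.univ.erase (0 : Fin d), ((m : ℕ) + 1) * t m with hcc_def
  set xg : (Fin d → ℕ) → (Fin d → ℕ) :=
    fun t k => if k = 0 then N - cc t else t k with hxg_def
  -- arithmetic facts
  have hdd : a * d ^ 2 * 4 ≤ N := by
    have h1 : N / (4 * d ^ 2) * (4 * d ^ 2) ≤ N := Nat.div_mul_le_self _ _
    calc a * d ^ 2 * 4 = a * (4 * d ^ 2) := by ring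
      _ ≤ N := by rw [ha]; exact h1
  have ha1 : 1 ≤ a := by
    rw [ha]
    refine (Nat.one_le_div_iff (by positivity)).2 (by omega)
  have hA : a ≤ a * d ^ 2 := Nat.le_mul_of_pos_right _ (by positivity)
  have hbox_spec : ∀ t ∈ box, t 0 = 0 ∧ ∀ m : Fin d, m ≠ 0 → a ≤ t m ∧ t m < 2 * a := by
    intro t ht
    rw [hbox_def, Fintype.mem_piFinset] at ht
    constructor
    · have := ht 0
      simpa using this
    · intro m hm
      have := ht m
      rw [if_neg hm, Finset.mem_Ico] at this
      exact this
  have hsumcoef : ∑ m : Fin d, ((m : ℕ) + 1) ≤ d ^ 2 := by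
    have h1 : ∑ m : Fin d, ((m : ℕ) + 1) = (∑ m : Fin d, (m : ℕ)) + d := by
      rw [Finset.sum_add_distrib]
      simp
    have h2 : ∑ m : Fin d, (m : ℕ) = ∑ i ∈ Finset.range d, i :=
      Fin.sum_univ_eq_sum_range (fun i => i) d
    have h5 : d * (d - 1) + d = d * d := by
      have h6 : d - 1 + 1 = d := by omega
      calc d * (d - 1) + d = d * ((d - 1) + 1) := by ring
        _ = d * d := by rw [h6]
    have h3 : d * (d - 1) / 2 + d ≤ d ^ 2 := by
      have h4 : d * (d - 1) / 2 ≤ d * (d - 1) := Nat.div_le_self _ _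
      calc d * (d - 1) / 2 + d ≤ d * (d - 1) + d := by omega
        _ = d * d := h5
        _ = d ^ 2 := (sq d).symm
    rw [h1, h2, Finset.sum_range_id]
    exact h3
  have hccle : ∀ t ∈ box, cc t ≤ a * d ^ 2 * 2 := by
    intro t ht
    have hsp := (hbox_spec t ht).2
    calc cc t ≤ ∑ m ∈ Finset.univ.erase (0 : Fin d), ((m : ℕ) + 1) * (2 * a) := by
          refine Finset.sum_le_sum fun m hm => ?_
          have := hsp m (Finset.mem_erase.1 hm).1
          exact Nat.mul_le_mul_left _ (by omega)
      _ ≤ ∑ m : Fin d, ((m : ℕ) + 1) * (2 * a) :=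
          Finset.sum_le_sum_of_subset (Finset.erase_subset _ _)
      _ = (∑ m : Fin d, ((m : ℕ) + 1)) * (2 * a) := by rw [Finset.sum_mul]
      _ ≤ d ^ 2 * (2 * a) := Nat.mul_le_mul_right _ hsumcoef
      _ = a * d ^ 2 * 2 := by ring
  have hx0 : ∀ t ∈ box, a ≤ xg t 0 := by
    intro t ht
    have h1 := hccle t ht
    have hx : xg t 0 = N - cc t := by rw [hxg_def]; simp
    rw [hx]
    have h2 : a + cc t ≤ N := by
      calc a + cc t ≤ a * d ^ 2 + a * d ^ 2 * 2 := Nat.add_le_add hA h1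
        _ ≤ a * d ^ 2 * 4 := by omega
        _ ≤ N := hdd
    omega
  have hxk : ∀ t ∈ box, ∀ k : Fin d, a ≤ xg t k := by
    intro t ht k
    by_cases hk : k = 0
    · rw [hk]; exact hx0 t ht
    · have := (hbox_spec t ht).2 k hk
      have hx : xg t k = t k := by rw [hxg_def]; simp [hk]
      omega
  have hmem : ∀ t ∈ box, build d (xg t) ∈ Lam d N := by
    intro t ht
    refine mem_Lam.2 ⟨buildMono _, ?_⟩
    rw [buildSum]
    have hsplit : ∑ k : Fin d, ((k : ℕ) + 1) * xg t k =
        ((0 : Fin d) : ℕ) * xg t 0 + xg t 0 + cc t := by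
      rw [← Finset.add_sum_erase _ (fun k : Fin d => ((k : ℕ) + 1) * xg t k) (Finset.mem_univ (0 : Fin d))]
      have he : ∑ m ∈ Finset.univ.erase (0 : Fin d), ((m : ℕ) + 1) * xg t m = cc t := by
        rw [hcc_def]
        refine Finset.sum_congr rfl fun m hm => ?_
        have hm0 : m ≠ 0 := (Finset.mem_erase.1 hm).1
        rw [show xg t m = t m from by rw [hxg_def]; simp [hm0]]
      rw [he]
      ring
    rw [hsplit]
    have hz : ((0 : Fin d) : ℕ) = 0 := rfl
    rw [hz, zero_mul, zero_add]
    have hxg0 : xg t 0 = N - cc t := by rw [hxg_def]; simp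
    have h1 := hccle t ht
    have h2 : cc t ≤ N := by
      calc cc t ≤ a * d ^ 2 * 2 := h1
        _ ≤ a * d ^ 2 * 4 := by omega
        _ ≤ N := hdd
    rw [hxg0]
    omega
  have hF : ∀ t ∈ box, a ^ d ≤ F d (build d (xg t)) := by
    intro t ht
    have hFeq : F d (build d (xg t)) = ∏ k, xg t k := by
      unfold F
      exact Finset.prod_congr rfl fun k _ => buildPgap _ k
    rw [hFeq]
    calc a ^ d = ∏ _k : Fin d, a := by rw [Finset.prod_const, Finset.card_univ, Fintype.card_fin]
      _ ≤ ∏ k, xg t k := Finset.prod_le_prod' fun k _ => hxk t ht k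
  have hinj : ∀ t ∈ box, ∀ t' ∈ box, build d (xg t) = build d (xg t') → t = t' := by
    intro t ht t' ht' heq
    funext k
    by_cases hk : k = 0
    · rw [hk, (hbox_spec t ht).1, (hbox_spec t' ht').1]
    · have h1 := congrArg (fun f => pgap d f k) heq
      simp only [buildPgap] at h1
      rwa [show xg t k = t k from by rw [hxg_def]; simp [hk],
        show xg t' k = t' k from by rw [hxg_def]; simp [hk]] at h1
  have hcard : box.card = a ^ (d - 1) := by
    rw [hbox_def, Fintype.card_piFinset]
    have h1 : ∀ k : Fin d, ((if k = 0 then ({0} : Finset ℕ) else Finset.Ico a (2 * a))).card =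
        if k = 0 then 1 else a := by
      intro k
      split_ifs
      · exact Finset.card_singleton _
      · rw [Nat.card_Ico]; omega
    rw [Finset.prod_congr rfl fun k _ => h1 k,
      ← Finset.mul_prod_erase Finset.univ _ (Finset.mem_univ (0 : Fin d)), if_pos rfl, one_mul,
      Finset.prod_congr rfl (fun m hm => if_neg (Finset.mem_erase.1 hm).1),
      Finset.prod_const, Finset.card_erase_of_mem (Finset.mem_univ _), Finset.card_univ,
      Fintype.card_fin]
  calc a ^ (3 * d - 1) = a ^ (d - 1) * (a ^ d) ^ 2 := by
        rw [← pow_mul, ← pow_add]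
        congr 1
        omega
    _ = box.card * (a ^ d) ^ 2 := by rw [hcard]
    _ ≤ ∑ t ∈ box, F d (build d (xg t)) ^ 2 := by
        rw [← smul_eq_mul]
        refine Finset.card_nsmul_le_sum box _ _ fun t ht => ?_
        exact Nat.pow_le_pow_left (hF t ht) 2
    _ = ∑ mu ∈ box.image (fun t => build d (xg t)), F d mu ^ 2 := by
        rw [Finset.sum_image hinj]
    _ ≤ DD d N := by
        unfold DD
        refine Finset.sum_le_sum_of_subset ?_
        rw [Finset.image_subset_iff]
        exact hmem

end Stmt14
namespace Stmt14

variable {d : ℕ}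

lemma DD_cast (N : ℕ) :
    ∑ mu ∈ Lam d N, (∏ j, (pgap d mu j : ℝ)) ^ 2 = ((DD d N : ℕ) : ℝ) := by
  unfold DD F
  push_cast
  rfl

lemma cN_eq (N : ℕ) (mu : Fin d → ℕ) :
    cN d N mu = (F d mu : ℝ) / Real.sqrt (DD d N) := by
  unfold cN
  rw [DD_cast]
  congr 1
  unfold F
  push_cast
  rfl

lemma RN_of_DD_zero (N : ℕ) (hD : DD d N = 0) : RN d N = 1 := by
  have hz : ∀ mu, cN d N mu = 0 := by
    intro mu
    rw [cN_eq, hD]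
    simp
  unfold RN
  simp [hz]

lemma sum_sq_eq (N : ℕ) (hD : 0 < DD d N) :
    ∑ l ∈ Lam d (N + 1), (∑ i ∈ SS d l, cN d N (dec d l i)) ^ 2 =
      (TT d N : ℝ) / (DD d N : ℝ) := by
  have hDr : (0 : ℝ) < (DD d N : ℝ) := by exact_mod_cast hD
  have h1 : ∀ l : Fin d → ℕ, ∑ i ∈ SS d l, cN d N (dec d l i) =
      (∑ i ∈ SS d l, (F d (dec d l i) : ℝ)) / Real.sqrt (DD d N) := by
    intro l
    rw [Finset.sum_div]
    exact Finset.sum_congr rfl fun i _ => cN_eq N _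
  calc ∑ l ∈ Lam d (N + 1), (∑ i ∈ SS d l, cN d N (dec d l i)) ^ 2
      = ∑ l ∈ Lam d (N + 1), (∑ i ∈ SS d l, (F d (dec d l i) : ℝ)) ^ 2 / (DD d N : ℝ) := by
        refine Finset.sum_congr rfl fun l _ => ?_
        rw [h1 l, div_pow, Real.sq_sqrt (le_of_lt hDr)]
    _ = (∑ l ∈ Lam d (N + 1), (∑ i ∈ SS d l, (F d (dec d l i) : ℝ)) ^ 2) / (DD d N : ℝ) := by
        rw [Finset.sum_div]
    _ = (TT d N : ℝ) / (DD d N : ℝ) := by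
        congr 1
        unfold TT
        push_cast
        rfl

lemma RN_eq (N : ℕ) (hD : 0 < DD d N) (hd0 : 0 < d) :
    RN d N = ((d : ℝ) ^ 2 * DD d N - TT d N) / ((d : ℝ) ^ 2 * DD d N) := by
  have hDr : (0 : ℝ) < (DD d N : ℝ) := by exact_mod_cast hD
  have hdr : (0 : ℝ) < (d : ℝ) := by exact_mod_cast hd0
  unfold RN
  rw [sum_sq_eq N hD]
  field_simp

lemma RN_nonneg (hd2 : 2 ≤ d) (N : ℕ) : 0 ≤ RN d N := by
  rcases Nat.eq_zero_or_pos (DD d N) with hD | hD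
  · rw [RN_of_DD_zero N hD]
    norm_num
  · rw [RN_eq N hD (by omega)]
    have hDr : (0 : ℝ) < (DD d N : ℝ) := by exact_mod_cast hD
    have hdr : (0 : ℝ) < (d : ℝ) := by exact_mod_cast (show 0 < d by omega)
    refine div_nonneg ?_ (by positivity)
    have h := TT_le (d := d) N
    have h' : (TT d N : ℝ) ≤ (d : ℝ) ^ 2 * DD d N := by exact_mod_cast h
    linarith

lemma RN_le (hd2 : 2 ≤ d) (N : ℕ) (hN : 8 * d ^ 2 ≤ N) :
    RN d N ≤ (((2 * d ^ 2 + 1) * 2 ^ (d - 1) * (8 * d ^ 2) ^ (3 * d - 1) : ℕ) : ℝ) / (N : ℝ) ^ 2 := by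
  have hd0 : 0 < d := by omega
  set a := N / (4 * d ^ 2) with ha
  have ha1 : 1 ≤ a := by
    rw [ha]
    refine (Nat.one_le_div_iff (by positivity)).2 (by nlinarith)
  have hDl : a ^ (3 * d - 1) ≤ DD d N := DD_lower hd2 ha hN
  have hDpos : 0 < DD d N := lt_of_lt_of_le (Nat.one_le_pow _ _ (by omega)) hDl
  have hDr : (0 : ℝ) < (DD d N : ℝ) := by exact_mod_cast hDpos
  have hdr : (0 : ℝ) < (d : ℝ) := by exact_mod_cast hd0
  have hN1 : 1 ≤ N := by nlinarith
  have hNr : (1 : ℝ) ≤ (N : ℝ) := by exact_mod_cast hN1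
  -- the integer inequality
  have hWb : ∑ i : Fin d, ∑ j : Fin d, W d N i j ≤ (d : ℤ) ^ 2 *
      ((((N + 1) ^ (d - 1) : ℕ) : ℤ) *
        ((2 * d * (N : ℤ) ^ (d - 1)) ^ 2 + 2 * ((N : ℤ) ^ (d - 1)) ^ 2)) := by
    calc ∑ i : Fin d, ∑ j : Fin d, W d N i j
        ≤ ∑ _i : Fin d, ∑ _j : Fin d, ((((N + 1) ^ (d - 1) : ℕ) : ℤ) *
          ((2 * d * (N : ℤ) ^ (d - 1)) ^ 2 + 2 * ((N : ℤ) ^ (d - 1)) ^ 2)) :=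
          Finset.sum_le_sum fun i _ => Finset.sum_le_sum fun j _ => W_le N (by omega) i j
      _ = (d : ℤ) ^ 2 * ((((N + 1) ^ (d - 1) : ℕ) : ℤ) *
          ((2 * d * (N : ℤ) ^ (d - 1)) ^ 2 + 2 * ((N : ℤ) ^ (d - 1)) ^ 2)) := by
          simp [Finset.sum_const, Finset.card_univ, Fintype.card_fin, nsmul_eq_mul]
          ring
  have hZ : 2 * ((d : ℤ) ^ 2 * DD d N - TT d N) ≤ (d : ℤ) ^ 2 *
      ((((N + 1) ^ (d - 1) : ℕ) : ℤ) *
        ((2 * d * (N : ℤ) ^ (d - 1)) ^ 2 + 2 * ((N : ℤ) ^ (d - 1)) ^ 2)) := by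
    rw [main_identity N]
    exact hWb
  have hR : 2 * ((d : ℝ) ^ 2 * DD d N - TT d N) ≤ (d : ℝ) ^ 2 *
      (((N : ℝ) + 1) ^ (d - 1) *
        ((2 * d * (N : ℝ) ^ (d - 1)) ^ 2 + 2 * ((N : ℝ) ^ (d - 1)) ^ 2)) := by
    have hcast : ((2 * ((d : ℤ) ^ 2 * DD d N - TT d N) : ℤ) : ℝ) ≤
        (((d : ℤ) ^ 2 * ((((N + 1) ^ (d - 1) : ℕ) : ℤ) *
          ((2 * d * (N : ℤ) ^ (d - 1)) ^ 2 + 2 * ((N : ℤ) ^ (d - 1)) ^ 2)) : ℤ) : ℝ) := by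
      exact_mod_cast hZ
    push_cast at hcast
    convert hcast using 2 <;> ring
  -- numerator bound
  have hnum : (d : ℝ) ^ 2 * DD d N - TT d N ≤
      (d : ℝ) ^ 2 * (2 * (d : ℝ) ^ 2 + 1) * ((N : ℝ) + 1) ^ (d - 1) * ((N : ℝ) ^ (d - 1)) ^ 2 := by
    nlinarith [hR, pow_nonneg (by linarith : (0:ℝ) ≤ (N:ℝ) + 1) (d - 1),
      sq_nonneg ((N : ℝ) ^ (d - 1)), pow_nonneg (le_of_lt hdr) 2]
  -- cast of a and N relation
  have hNa : (N : ℝ) ≤ 8 * (d : ℝ) ^ 2 * (a : ℝ) := by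
    have hnat : N ≤ 8 * d ^ 2 * a := by
      have hdm := Nat.div_add_mod N (4 * d ^ 2)
      have hr : N % (4 * d ^ 2) < 4 * d ^ 2 := Nat.mod_lt _ (by positivity)
      have he : 8 * d ^ 2 * a = 2 * (4 * d ^ 2 * (N / (4 * d ^ 2))) := by rw [ha]; ring
      rw [he]
      generalize hq : 4 * d ^ 2 * (N / (4 * d ^ 2)) = qa at hdm
      omega
    exact_mod_cast hnat
  have hba : (0 : ℝ) ≤ (a : ℝ) := by positivity
  have hDlr : ((a : ℝ)) ^ (3 * d - 1) ≤ (DD d N : ℝ) := by exact_mod_cast hDl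
  -- final chain
  rw [RN_eq N hDpos hd0, div_le_div_iff₀ (by positivity) (by positivity)]
  have hx0 : (0 : ℝ) ≤ (N : ℝ) := by linarith
  calc ((d : ℝ) ^ 2 * DD d N - TT d N) * (N : ℝ) ^ 2
      ≤ ((d : ℝ) ^ 2 * (2 * (d : ℝ) ^ 2 + 1) * ((N : ℝ) + 1) ^ (d - 1) *
          ((N : ℝ) ^ (d - 1)) ^ 2) * (N : ℝ) ^ 2 := by
        refine mul_le_mul_of_nonneg_right hnum (by positivity)
    _ ≤ ((d : ℝ) ^ 2 * (2 * (d : ℝ) ^ 2 + 1) * (2 * (N : ℝ)) ^ (d - 1) *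
          ((N : ℝ) ^ (d - 1)) ^ 2) * (N : ℝ) ^ 2 := by
        have h2 : ((N : ℝ) + 1) ^ (d - 1) ≤ (2 * (N : ℝ)) ^ (d - 1) :=
          pow_le_pow_left₀ (by linarith) (by linarith) _
        have hrest : (0 : ℝ) ≤ (d : ℝ) ^ 2 * (2 * (d : ℝ) ^ 2 + 1) := by positivity
        have hrest2 : (0 : ℝ) ≤ ((N : ℝ) ^ (d - 1)) ^ 2 * (N : ℝ) ^ 2 := by positivity
        nlinarith [mul_le_mul_of_nonneg_right h2 hrest2, hrest,
          mul_le_mul_of_nonneg_left (mul_le_mul_of_nonneg_right h2 hrest2) hrest]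
    _ = (d : ℝ) ^ 2 * (2 * (d : ℝ) ^ 2 + 1) * 2 ^ (d - 1) * (N : ℝ) ^ (3 * d - 1) := by
        rw [mul_pow]
        rw [show ((N : ℝ) ^ (d - 1)) ^ 2 = (N : ℝ) ^ (2 * d - 2) by
          rw [← pow_mul]; congr 1; omega]
        rw [show (N : ℝ) ^ (3 * d - 1) =
          (N : ℝ) ^ (d - 1) * (N : ℝ) ^ (2 * d - 2) * (N : ℝ) ^ 2 by
          rw [← pow_add, ← pow_add]; congr 1; omega]
        ring
    _ ≤ (d : ℝ) ^ 2 * (2 * (d : ℝ) ^ 2 + 1) * 2 ^ (d - 1) *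
          ((8 * (d : ℝ) ^ 2) ^ (3 * d - 1) * (a : ℝ) ^ (3 * d - 1)) := by
        refine mul_le_mul_of_nonneg_left ?_ (by positivity)
        rw [← mul_pow]
        exact pow_le_pow_left₀ hx0 hNa _
    _ ≤ (d : ℝ) ^ 2 * (2 * (d : ℝ) ^ 2 + 1) * 2 ^ (d - 1) *
          ((8 * (d : ℝ) ^ 2) ^ (3 * d - 1) * (DD d N : ℝ)) := by
        refine mul_le_mul_of_nonneg_left ?_ (by positivity)
        exact mul_le_mul_of_nonneg_left hDlr (by positivity)
    _ = (((2 * d ^ 2 + 1) * 2 ^ (d - 1) * (8 * d ^ 2) ^ (3 * d - 1) : ℕ) : ℝ) *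
          ((d : ℝ) ^ 2 * DD d N) := by
        push_cast
        ring

end Stmt14


/-- `R_N ≥ 0` for all `N ≥ 1`, and there are `K` and `N₀` with
`R_N ≤ K/N²` for all `N ≥ N₀`: the strategy achieves the rate `1/N²`. -/
theorem stmt14 (d : ℕ) (hd : 2 ≤ d) :
    (∀ N : ℕ, 1 ≤ N → 0 ≤ RN d N) ∧
    ∃ K : ℝ, ∃ N₀ : ℕ, ∀ N : ℕ, N₀ ≤ N → RN d N ≤ K / N ^ 2 := by
  constructor
  · intro N _
    exact Stmt14.RN_nonneg hd N
  · exact ⟨(((2 * d ^ 2 + 1) * 2 ^ (d - 1) * (8 * d ^ 2) ^ (3 * d - 1) : ℕ) : ℝ), 8 * d ^ 2,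
      fun N hN => Stmt14.RN_le hd N hN⟩
end

section
/- Let d ≥ 1. There exist constants ε > 0 and c > 0 such that for every d×d Hermitian matrix H with Tr(H) = 0 and operator norm ‖H‖ ≤ ε, the fidelity cost satisfies 1 − |Tr(exp(iH))|²/d² ≥ c · Tr(H²). (This is the quadratic lower bound on the cost function Δ(1, U) = 1 − |Tr(U)|²/d² near the identity of SU(d), needed to deduce the N^{−2} lower bound on the risk from the Van Trees–type Cramér–Rao argument.) -/
/-!
Expanding to second order, `exp(iH) = 1 + iH - H²/2 + O(‖H‖³)`, so for traceless Hermitian `H`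
the trace is `d - Tr(H²)/2 + d·O(‖H‖³)`. Since `‖H‖² ≤ Tr(H²)` (operator norm below Frobenius
norm), the error is at most `Tr(H²)/4` once `‖H‖` is small, whence
`|Tr exp(iH)| ≤ d - Tr(H²)/4` and `|Tr exp(iH)|²/d² ≤ 1 - Tr(H²)/(4d)`.
-/

open scoped Matrix.Norms.L2Operator ComplexOrder Nat
open Topology

theorem NormedSpace.exp_sub_sum_range_isBigO (𝕂 : Type*) {𝔸 : Type*} [RCLike 𝕂] [NormedRing 𝔸]
    [NormedAlgebra 𝕂 𝔸] [CompleteSpace 𝔸] (n : ℕ) :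
    (fun x : 𝔸 => exp x - ∑ k ∈ Finset.range n, (k !⁻¹ : 𝕂) • x ^ k)
      =O[𝓝 0] fun x => ‖x‖ ^ n := by
  simpa [FormalMultilinearSeries.partialSum, expSeries_apply_eq] using
    (exp_hasFPowerSeriesAt_zero (𝕂 := 𝕂) (𝔸 := 𝔸)).isBigO_sub_partialSum_pow n

theorem NormedSpace.exists_norm_exp_sub_sum_range_le (𝕂 : Type*) {𝔸 : Type*} [RCLike 𝕂]
    [NormedRing 𝔸] [NormedAlgebra 𝕂 𝔸] [CompleteSpace 𝔸] (n : ℕ) :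
    ∃ δ > 0, ∃ C > 0, ∀ x : 𝔸, ‖x‖ ≤ δ →
      ‖exp x - ∑ k ∈ Finset.range n, (k !⁻¹ : 𝕂) • x ^ k‖ ≤ C * ‖x‖ ^ n := by
  obtain ⟨C, hC, hbound⟩ := (exp_sub_sum_range_isBigO 𝕂 (𝔸 := 𝔸) n).exists_pos
  obtain ⟨δ, hδ, hδbound⟩ := Metric.eventually_nhds_iff.mp hbound.bound
  refine ⟨δ / 2, half_pos hδ, C, hC, fun x hx => ?_⟩
  simpa using hδbound (show dist x 0 < δ by rw [dist_zero_right]; linarith)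

lemma sq_div_sq_le_one_sub_div {a d s : ℝ} (hd : 0 < d) (hs : 0 ≤ s) (ha : 0 ≤ a)
    (h : a ≤ d - s) : a ^ 2 / d ^ 2 ≤ 1 - s / d := by
  rw [div_le_iff₀ (by positivity)]
  calc a ^ 2 ≤ (d - s) ^ 2 := pow_le_pow_left₀ ha h 2
    _ ≤ d ^ 2 - d * s := by nlinarith
    _ = (1 - s / d) * d ^ 2 := by field_simp

namespace Matrix

variable {𝕜 m n : Type*} [RCLike 𝕜] [Fintype m] [Fintype n]

lemma trace_conjTranspose_mul_self_eq_sum_norm_sq (A : Matrix m n 𝕜) :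
    (Aᴴ * A).trace = ((∑ i, ∑ j, ‖A i j‖ ^ 2 : ℝ) : 𝕜) := by
  rw [trace, Finset.sum_comm]
  push_cast
  refine Finset.sum_congr rfl fun j _ => ?_
  simp [mul_apply, RCLike.conj_mul]

variable [DecidableEq n]

lemma IsHermitian.trace_sq {A : Matrix n n 𝕜} (hA : A.IsHermitian) :
    (A ^ 2).trace = ((∑ i, ∑ j, ‖A i j‖ ^ 2 : ℝ) : 𝕜) := by
  rw [sq]
  nth_rewrite 1 [← hA.eq]
  exact trace_conjTranspose_mul_self_eq_sum_norm_sq A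

lemma norm_entry_le_l2_opNorm (A : Matrix m n 𝕜) (i : m) (j : n) : ‖A i j‖ ≤ ‖A‖ := by
  have h := A.l2_opNorm_mulVec (EuclideanSpace.single j 1)
  rw [EuclideanSpace.single, PiLp.norm_single, norm_one, mul_one] at h
  refine le_trans (le_of_eq ?_) ((PiLp.norm_apply_le _ i).trans h)
  simp [mulVec_single]

lemma norm_trace_le_card_mul_l2_opNorm (A : Matrix n n 𝕜) :
    ‖A.trace‖ ≤ Fintype.card n * ‖A‖ :=
  calc ‖A.trace‖ ≤ ∑ i, ‖A i i‖ := norm_sum_le _ _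
    _ ≤ ∑ _i : n, ‖A‖ := Finset.sum_le_sum fun i _ => A.norm_entry_le_l2_opNorm i i
    _ = Fintype.card n * ‖A‖ := by simp

lemma l2_opNorm_sq_le_sum_norm_sq (A : Matrix m n 𝕜) : ‖A‖ ^ 2 ≤ ∑ i, ∑ j, ‖A i j‖ ^ 2 := by
  set S := ∑ i, ∑ j, ‖A i j‖ ^ 2
  have hS : 0 ≤ S := by positivity
  suffices ‖A‖ ≤ √S by simpa [Real.sq_sqrt hS] using pow_le_pow_left₀ (norm_nonneg _) this 2
  rw [l2_opNorm_def]
  refine ContinuousLinearMap.opNorm_le_bound _ (Real.sqrt_nonneg _) fun x => ?_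
  refine (sq_le_sq₀ (by positivity) (by positivity)).mp ?_
  have hrow : ∀ i, ‖∑ j, A i j * x j‖ ^ 2 ≤ (∑ j, ‖A i j‖ ^ 2) * ‖x‖ ^ 2 := fun i =>
    calc ‖∑ j, A i j * x j‖ ^ 2 ≤ (∑ j, ‖A i j‖ * ‖x j‖) ^ 2 := by
          gcongr; exact (norm_sum_le _ _).trans_eq (by simp [norm_mul])
      _ ≤ (∑ j, ‖A i j‖ ^ 2) * ∑ j, ‖x j‖ ^ 2 := Finset.sum_mul_sq_le_sq_mul_sq _ _ _
      _ = (∑ j, ‖A i j‖ ^ 2) * ‖x‖ ^ 2 := by rw [EuclideanSpace.norm_sq_eq]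
  calc _ = ∑ i, ‖∑ j, A i j * x j‖ ^ 2 := by
        simp [EuclideanSpace.norm_sq_eq, mulVec, dotProduct]
    _ ≤ ∑ i, (∑ j, ‖A i j‖ ^ 2) * ‖x‖ ^ 2 := Finset.sum_le_sum fun i _ => hrow i
    _ = (√S * ‖x‖) ^ 2 := by rw [← Finset.sum_mul, mul_pow, Real.sq_sqrt hS]

lemma IsHermitian.l2_opNorm_sq_le_re_trace_sq {A : Matrix n n 𝕜} (hA : A.IsHermitian) :
    ‖A‖ ^ 2 ≤ RCLike.re (A ^ 2).trace := by
  simpa [hA.trace_sq] using A.l2_opNorm_sq_le_sum_norm_sq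

lemma re_trace_sq_le_card_mul_l2_opNorm_sq (A : Matrix n n 𝕜) :
    RCLike.re (A ^ 2).trace ≤ Fintype.card n * ‖A‖ ^ 2 :=
  calc RCLike.re (A ^ 2).trace ≤ ‖(A ^ 2).trace‖ := RCLike.re_le_norm _
    _ ≤ Fintype.card n * ‖A ^ 2‖ := (A ^ 2).norm_trace_le_card_mul_l2_opNorm
    _ ≤ Fintype.card n * ‖A‖ ^ 2 := by gcongr; rw [sq, sq]; exact l2_opNorm_mul A A

section Complex

variable {n : Type*} [Fintype n]

lemma IsHermitian.ofReal_re_trace {A : Matrix n n ℂ} (hA : A.IsHermitian) :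
    (A.trace.re : ℂ) = A.trace :=
  Complex.conj_eq_iff_re.mp <| by rw [← Complex.star_def, ← trace_conjTranspose, hA.eq]

variable [DecidableEq n]

lemma IsHermitian.trace_sum_range_three_I_smul {H : Matrix n n ℂ} (hH : H.IsHermitian)
    (htr : H.trace = 0) :
    (∑ k ∈ Finset.range 3, (k !⁻¹ : ℂ) • (Complex.I • H) ^ k).trace
      = ((Fintype.card n - (H ^ 2).trace.re / 2 : ℝ) : ℂ) := by
  have hsq := (hH.pow 2).ofReal_re_trace
  set t := (H ^ 2).trace.re
  simp [Finset.sum_range_succ, trace_add, smul_pow, htr, ← hsq]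
  ring

lemma IsHermitian.norm_trace_exp_I_smul_le {H : Matrix n n ℂ} (hH : H.IsHermitian)
    (htr : H.trace = 0) (hH1 : ‖H‖ ≤ 1) {C : ℝ}
    (hrem : ‖NormedSpace.exp (Complex.I • H)
      - ∑ k ∈ Finset.range 3, (k !⁻¹ : ℂ) • (Complex.I • H) ^ k‖ ≤ C * ‖H‖ ^ 3)
    (hsmall : Fintype.card n * (C * ‖H‖) ≤ 1 / 4) :
    ‖(NormedSpace.exp (Complex.I • H)).trace‖ ≤ Fintype.card n - (H ^ 2).trace.re / 4 := by
  set P := ∑ k ∈ Finset.range 3, (k !⁻¹ : ℂ) • (Complex.I • H) ^ k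
  set t := (H ^ 2).trace.re
  have hnorm_sq : ‖H‖ ^ 2 ≤ t := hH.l2_opNorm_sq_le_re_trace_sq
  have ht_le : t ≤ Fintype.card n * ‖H‖ ^ 2 := H.re_trace_sq_le_card_mul_l2_opNorm_sq
  have hdt : 0 ≤ Fintype.card n - t / 2 := by nlinarith [pow_le_one₀ (n := 2) (norm_nonneg H) hH1]
  have hP : ‖P.trace‖ = Fintype.card n - t / 2 := by
    rw [hH.trace_sum_range_three_I_smul htr, Complex.norm_real, Real.norm_of_nonneg hdt]
  have hclose : ‖(NormedSpace.exp (Complex.I • H)).trace - P.trace‖ ≤ t / 4 :=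
    calc _ = ‖(NormedSpace.exp (Complex.I • H) - P).trace‖ := by rw [trace_sub]
      _ ≤ Fintype.card n * (C * ‖H‖ ^ 3) :=
          (norm_trace_le_card_mul_l2_opNorm _).trans (by gcongr)
      _ = Fintype.card n * (C * ‖H‖) * ‖H‖ ^ 2 := by ring
      _ ≤ 1 / 4 * t := by gcongr
      _ = t / 4 := by ring
  calc _ ≤ ‖P.trace‖ + ‖(NormedSpace.exp (Complex.I • H)).trace - P.trace‖ :=
        norm_le_insert' _ _
    _ ≤ Fintype.card n - t / 4 := by linarith

end Complex

end Matrix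

/-- there are `ε > 0` and `c > 0` such that for every `d×d` Hermitian matrix `H`
with `Tr H = 0` and operator norm `‖H‖ ≤ ε`, the fidelity cost satisfies
`1 - |Tr(exp(iH))|²/d² ≥ c · Tr(H²)`.  (The norm is the `ℓ²` operator norm on matrices;
`Tr(H²)` is real since `H` is Hermitian, and we take its real part.) -/
theorem stmt18 (d : ℕ) (hd : 1 ≤ d) :
    ∃ ε : ℝ, 0 < ε ∧ ∃ c : ℝ, 0 < c ∧
      ∀ H : Matrix (Fin d) (Fin d) ℂ, H.IsHermitian → H.trace = 0 → ‖H‖ ≤ ε →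
        c * ((H ^ 2).trace).re
          ≤ 1 - ‖(NormedSpace.exp (Complex.I • H)).trace‖ ^ 2 / (d : ℝ) ^ 2 := by
  obtain ⟨δ, hδ, C, hC, hexp⟩ :=
    NormedSpace.exists_norm_exp_sub_sum_range_le ℂ (𝔸 := Matrix (Fin d) (Fin d) ℂ) 3
  have hd0 : (0 : ℝ) < d := by exact_mod_cast hd
  refine ⟨min 1 (min δ (1 / (4 * d * C))), by positivity, 1 / (4 * d), by positivity, ?_⟩
  intro H hH htr hε
  have hH1 : ‖H‖ ≤ 1 := hε.trans (min_le_left _ _)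
  have hHδ : ‖Complex.I • H‖ ≤ δ := by
    rw [norm_smul, Complex.norm_I, one_mul]
    exact hε.trans ((min_le_right _ _).trans (min_le_left _ _))
  have hsmall : Fintype.card (Fin d) * (C * ‖H‖) ≤ 1 / 4 := by
    have := hε.trans ((min_le_right _ _).trans (min_le_right _ _))
    rw [le_div_iff₀ (by positivity)] at this
    rw [Fintype.card_fin]
    linarith
  have htrace := hH.norm_trace_exp_I_smul_le htr hH1
    (by simpa [norm_smul] using hexp _ hHδ) hsmall
  rw [Fintype.card_fin] at htrace
  have ht : 0 ≤ (H ^ 2).trace.re / 4 :=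
    div_nonneg ((sq_nonneg _).trans hH.l2_opNorm_sq_le_re_trace_sq) zero_le_four
  have := sq_div_sq_le_one_sub_div hd0 ht (norm_nonneg _) htrace
  linarith [show 1 / (4 * (d : ℝ)) * (H ^ 2).trace.re = (H ^ 2).trace.re / 4 / d by field_simp]
end
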